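/- arXiv:math/9907008 — 6 statements merged into one kernel-verified Lean document; each statement's English description precedes it below -/
import Mathlib

section
/- Let R be the two-sided ideal of T generated by the three matrices E₁₂, β·E₂₂ and E₂₃. For every integer n ≥ 1, the n-th power Rⁿ equals the set of all matrices in T whose (1,1)-, (3,3)- and below-diagonal entries are 0, whose (1,2)-entry lies in (β^{n−1}), whose (1,3)-entry lies in (β^{max(0,n−2)}), whose (2,2)-entry lies in (β^n), and whose (2,3)-entry lies in (β^{n−1}). -/
open Polynomial Matrix

noncomputable section

/-- `Algebra` structure on the quotient of a `k`-algebra by a ring congruence. -/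
instance RingConQuotient.algebra (k R : Type*) [CommSemiring k] [Ring R] [Algebra k R]
    (c : RingCon R) : Algebra k c.Quotient where
  algebraMap := (RingCon.mk' c).comp (algebraMap k R)
  commutes' := by
    intro r x
    induction x using Quotient.ind
    exact congrArg _ (Algebra.commutes r _)
  smul_def' := by
    intro r x
    induction x using Quotient.ind
    exact congrArg _ (Algebra.smul_def r _)

variable (k : Type*) [Field k]

/-- `D` is a `k`-derivation (as a linear endomorphism of a `k`-algebra). -/
def IsDer {R : Type*} [Ring R] [Algebra k R] (D : R →ₗ[k] R) : Prop :=
  ∀ x y : R, D (x * y) = D x * y + x * D y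

/-- `D` is an inner derivation. -/
def IsInner {R : Type*} [Ring R] [Algebra k R] (D : R →ₗ[k] R) : Prop :=
  ∃ a : R, ∀ x : R, D x = a * x - x * a

/-- The ideal `(β^j)` of `k[β]`, as a `k`-submodule. -/
def Bsub (j : ℕ) : Submodule k (Polynomial k) where
  carrier := {p | X ^ j ∣ p}
  zero_mem' := dvd_zero _
  add_mem' := fun h1 h2 => dvd_add h1 h2
  smul_mem' := fun c p hp => by
    simpa [Polynomial.smul_eq_C_mul] using Dvd.dvd.mul_left hp (C c)

lemma mem_Bsub {k : Type*} [Field k] {j : ℕ} {p : Polynomial k} :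
    p ∈ Bsub k j ↔ X ^ j ∣ p := Iff.rfl

/-- The algebra `T`: upper triangular 3×3 matrices over `k[β]` whose
`(1,1)` and `(3,3)` entries are constants. -/
def Tsub : Subalgebra k (Matrix (Fin 3) (Fin 3) (Polynomial k)) where
  carrier := {M | (∀ i j : Fin 3, j < i → M i j = 0) ∧
      (∃ x : k, M 0 0 = C x) ∧ (∃ z : k, M 2 2 = C z)}
  zero_mem' := ⟨fun _ _ _ => rfl, ⟨0, by simp⟩, ⟨0, by simp⟩⟩
  one_mem' := ⟨fun i j h => Matrix.one_apply_ne h.ne', ⟨1, by simp⟩, ⟨1, by simp⟩⟩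
  add_mem' := by
    rintro a b ⟨hal, ⟨x, hax⟩, ⟨z, haz⟩⟩ ⟨hbl, ⟨y, hby⟩, ⟨w, hbw⟩⟩
    refine ⟨fun i j h => by simp [hal i j h, hbl i j h], ⟨x + y, by simp [hax, hby]⟩,
      ⟨z + w, by simp [haz, hbw]⟩⟩
  mul_mem' := by
    rintro a b ⟨hal, ⟨x, hax⟩, ⟨z, haz⟩⟩ ⟨hbl, ⟨y, hby⟩, ⟨w, hbw⟩⟩
    refine ⟨fun i j h => ?_, ⟨x * y, ?_⟩, ⟨z * w, ?_⟩⟩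
    · rw [Matrix.mul_apply]
      apply Finset.sum_eq_zero
      intro l _
      rcases lt_or_ge l i with hl | hl
      · rw [hal i l hl, zero_mul]
      · rw [hbl l j (lt_of_lt_of_le h hl), mul_zero]
    · rw [Matrix.mul_apply, Fin.sum_univ_three,
        hbl 1 0 (by decide), hbl 2 0 (by decide), hax, hby]
      simp
    · rw [Matrix.mul_apply, Fin.sum_univ_three,
        hal 2 0 (by decide), hal 2 1 (by decide), haz, hbw]
      simp
  algebraMap_mem' := by
    intro r
    refine ⟨fun i j h => ?_, ⟨r, ?_⟩, ⟨r, ?_⟩⟩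
    · rw [Matrix.algebraMap_matrix_apply, if_neg h.ne']
    · rw [Matrix.algebraMap_matrix_apply, if_pos rfl]; rfl
    · rw [Matrix.algebraMap_matrix_apply, if_pos rfl]; rfl

/-- The matrix `p·E₁₂` as an element of `T`. -/
def tE12 (p : Polynomial k) : Tsub k :=
  ⟨Matrix.single 0 1 p, by
    refine ⟨fun i j h => ?_, ⟨0, ?_⟩, ⟨0, ?_⟩⟩
    · fin_cases i <;> fin_cases j <;> simp_all [Matrix.single, Matrix.of_apply]
    · simp [Matrix.single, Matrix.of_apply]
    · simp [Matrix.single, Matrix.of_apply]⟩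

/-- The matrix `p·E₂₂` as an element of `T`. -/
def tE22 (p : Polynomial k) : Tsub k :=
  ⟨Matrix.single 1 1 p, by
    refine ⟨fun i j h => ?_, ⟨0, ?_⟩, ⟨0, ?_⟩⟩
    · fin_cases i <;> fin_cases j <;> simp_all [Matrix.single, Matrix.of_apply]
    · simp [Matrix.single, Matrix.of_apply]
    · simp [Matrix.single, Matrix.of_apply]⟩

/-- The matrix `p·E₂₃` as an element of `T`. -/
def tE23 (p : Polynomial k) : Tsub k :=
  ⟨Matrix.single 1 2 p, by
    refine ⟨fun i j h => ?_, ⟨0, ?_⟩, ⟨0, ?_⟩⟩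
    · fin_cases i <;> fin_cases j <;> simp_all [Matrix.single, Matrix.of_apply]
    · simp [Matrix.single, Matrix.of_apply]
    · simp [Matrix.single, Matrix.of_apply]⟩

/-- The matrix `p·E₁₃` as an element of `T`. -/
def tE13 (p : Polynomial k) : Tsub k :=
  ⟨Matrix.single 0 2 p, by
    refine ⟨fun i j h => ?_, ⟨0, ?_⟩, ⟨0, ?_⟩⟩
    · fin_cases i <;> fin_cases j <;> simp_all [Matrix.single, Matrix.of_apply]
    · simp [Matrix.single, Matrix.of_apply]
    · simp [Matrix.single, Matrix.of_apply]⟩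

/-- The idempotent `E₁₁` as an element of `T`. -/
def tE11 : Tsub k :=
  ⟨Matrix.single 0 0 1, by
    refine ⟨fun i j h => ?_, ⟨1, ?_⟩, ⟨0, ?_⟩⟩
    · fin_cases i <;> fin_cases j <;> simp_all [Matrix.single, Matrix.of_apply]
    · simp [Matrix.single, Matrix.of_apply]
    · simp [Matrix.single, Matrix.of_apply]⟩

/-- The idempotent `E₂₂` as an element of `T`. -/
def tE22one : Tsub k := tE22 k 1

/-- The idempotent `E₃₃` as an element of `T`. -/
def tE33 : Tsub k :=
  ⟨Matrix.single 2 2 1, by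
    refine ⟨fun i j h => ?_, ⟨0, ?_⟩, ⟨1, ?_⟩⟩
    · fin_cases i <;> fin_cases j <;> simp_all [Matrix.single, Matrix.of_apply]
    · simp [Matrix.single, Matrix.of_apply]
    · simp [Matrix.single, Matrix.of_apply]⟩

/-- The underlying set of the ideal `I(n; n', n''; V)` of `T`. -/
def Icar (n n' n'' : ℕ) (V : Submodule k (Polynomial k)) : Set (Tsub k) :=
  {M | (M : Matrix (Fin 3) (Fin 3) (Polynomial k)) 0 0 = 0 ∧
       (M : Matrix (Fin 3) (Fin 3) (Polynomial k)) 2 2 = 0 ∧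
       X ^ n' ∣ (M : Matrix (Fin 3) (Fin 3) (Polynomial k)) 0 1 ∧
       (M : Matrix (Fin 3) (Fin 3) (Polynomial k)) 0 2 ∈ V ∧
       X ^ n ∣ (M : Matrix (Fin 3) (Fin 3) (Polynomial k)) 1 1 ∧
       X ^ n'' ∣ (M : Matrix (Fin 3) (Fin 3) (Polynomial k)) 1 2}

variable {k}

lemma Tsub_lower {a : Tsub k} :
    ∀ i j : Fin 3, j < i → (a : Matrix (Fin 3) (Fin 3) (Polynomial k)) i j = 0 := a.2.1

lemma Tsub_00 (a : Tsub k) : ∃ x : k, (a : Matrix (Fin 3) (Fin 3) (Polynomial k)) 0 0 = C x :=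
  a.2.2.1

lemma Tsub_22 (a : Tsub k) : ∃ z : k, (a : Matrix (Fin 3) (Fin 3) (Polynomial k)) 2 2 = C z :=
  a.2.2.2

variable (k)

/-- The two-sided ideal `I(n; n', n''; V)` of `T`. -/
def Itsi (n n' n'' : ℕ) (V : Submodule k (Polynomial k)) (hn' : n' ≤ n) (hn'' : n'' ≤ n)
    (hV : ∀ p : Polynomial k, X ^ min n' n'' ∣ p → p ∈ V) : TwoSidedIdeal (Tsub k) :=
  TwoSidedIdeal.mk' (Icar k n n' n'' V)
    (by
      refine ⟨rfl, rfl, ?_, ?_, ?_, ?_⟩ <;> simp)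
    (by
      rintro a b ⟨h1, h2, h3, h4, h5, h6⟩ ⟨g1, g2, g3, g4, g5, g6⟩
      refine ⟨?_, ?_, ?_, ?_, ?_, ?_⟩ <;>
        simp only [AddMemClass.coe_add, Matrix.add_apply]
      · rw [h1, g1, add_zero]
      · rw [h2, g2, add_zero]
      · exact dvd_add h3 g3
      · exact V.add_mem h4 g4
      · exact dvd_add h5 g5
      · exact dvd_add h6 g6)
    (by
      rintro a ⟨h1, h2, h3, h4, h5, h6⟩
      refine ⟨?_, ?_, ?_, ?_, ?_, ?_⟩ <;>
        simp only [NegMemClass.coe_neg, Matrix.neg_apply]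
      · rw [h1, neg_zero]
      · rw [h2, neg_zero]
      · exact dvd_neg.mpr h3
      · exact V.neg_mem h4
      · exact dvd_neg.mpr h5
      · exact dvd_neg.mpr h6)
    (by
      rintro t a ⟨h1, h2, h3, h4, h5, h6⟩
      have hta : ((t * a : Tsub k) : Matrix (Fin 3) (Fin 3) (Polynomial k)) =
          (t : Matrix (Fin 3) (Fin 3) (Polynomial k)) * a := rfl
      obtain ⟨x, hx⟩ := Tsub_00 t
      refine ⟨?_, ?_, ?_, ?_, ?_, ?_⟩ <;>
        rw [hta, Matrix.mul_apply, Fin.sum_univ_three]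
      · rw [h1, Tsub_lower (a := a) 1 0 (by decide), Tsub_lower (a := a) 2 0 (by decide)]
        simp
      · rw [h2, Tsub_lower (a := t) 2 0 (by decide), Tsub_lower (a := t) 2 1 (by decide)]
        simp
      · rw [Tsub_lower (a := a) 2 1 (by decide)]
        simp only [mul_zero, add_zero]
        exact dvd_add (Dvd.dvd.mul_left h3 _)
          (Dvd.dvd.mul_left ((pow_dvd_pow X hn').trans h5) _)
      · rw [h2]
        simp only [mul_zero, add_zero]
        refine V.add_mem ?_
          (hV _ (Dvd.dvd.mul_left ((pow_dvd_pow X (min_le_right n' n'')).trans h6) _))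
        rw [hx]
        have : C x * (a : Matrix (Fin 3) (Fin 3) (Polynomial k)) 0 2 =
            x • (a : Matrix (Fin 3) (Fin 3) (Polynomial k)) 0 2 := by
          rw [Polynomial.smul_eq_C_mul]
        rw [this]
        exact V.smul_mem _ h4
      · rw [Tsub_lower (a := t) 1 0 (by decide), Tsub_lower (a := a) 2 1 (by decide)]
        simp only [zero_mul, mul_zero, zero_add, add_zero]
        exact Dvd.dvd.mul_left h5 _
      · rw [Tsub_lower (a := t) 1 0 (by decide), h2]
        simp only [zero_mul, mul_zero, zero_add, add_zero]
        exact Dvd.dvd.mul_left h6 _)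
    (by
      rintro a t ⟨h1, h2, h3, h4, h5, h6⟩
      have hta : ((a * t : Tsub k) : Matrix (Fin 3) (Fin 3) (Polynomial k)) =
          (a : Matrix (Fin 3) (Fin 3) (Polynomial k)) * t := rfl
      obtain ⟨z, hz⟩ := Tsub_22 t
      refine ⟨?_, ?_, ?_, ?_, ?_, ?_⟩ <;>
        rw [hta, Matrix.mul_apply, Fin.sum_univ_three]
      · rw [h1, Tsub_lower (a := t) 1 0 (by decide), Tsub_lower (a := t) 2 0 (by decide)]
        simp
      · rw [h2, Tsub_lower (a := a) 2 0 (by decide), Tsub_lower (a := a) 2 1 (by decide)]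
        simp
      · rw [h1, Tsub_lower (a := t) 2 1 (by decide)]
        simp only [zero_mul, mul_zero, zero_add, add_zero]
        exact Dvd.dvd.mul_right h3 _
      · rw [h1]
        simp only [zero_mul, zero_add]
        refine V.add_mem
          (hV _ (Dvd.dvd.mul_right ((pow_dvd_pow X (min_le_left n' n'')).trans h3) _)) ?_
        rw [hz]
        have : (a : Matrix (Fin 3) (Fin 3) (Polynomial k)) 0 2 * C z =
            z • (a : Matrix (Fin 3) (Fin 3) (Polynomial k)) 0 2 := by
          rw [Polynomial.smul_eq_C_mul, mul_comm]
        rw [this]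
        exact V.smul_mem _ h4
      · rw [Tsub_lower (a := a) 1 0 (by decide), Tsub_lower (a := t) 2 1 (by decide)]
        simp only [zero_mul, mul_zero, zero_add, add_zero]
        exact Dvd.dvd.mul_right h5 _
      · rw [Tsub_lower (a := a) 1 0 (by decide)]
        simp only [zero_mul, zero_add]
        exact dvd_add (Dvd.dvd.mul_right ((pow_dvd_pow X hn'').trans h5) _)
          (Dvd.dvd.mul_right h6 _))

/-- The quotient algebra `A = T / I(n; n', n''; V)`. -/
def Aquot (n n' n'' : ℕ) (V : Submodule k (Polynomial k)) (hn' : n' ≤ n) (hn'' : n'' ≤ n)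
    (hV : ∀ p : Polynomial k, X ^ min n' n'' ∣ p → p ∈ V) : Type _ :=
  (Itsi k n n' n'' V hn' hn'' hV).ringCon.Quotient

instance (n n' n'' : ℕ) (V : Submodule k (Polynomial k)) (hn' : n' ≤ n) (hn'' : n'' ≤ n)
    (hV : ∀ p : Polynomial k, X ^ min n' n'' ∣ p → p ∈ V) :
    Ring (Aquot k n n' n'' V hn' hn'' hV) :=
  inferInstanceAs (Ring (Itsi k n n' n'' V hn' hn'' hV).ringCon.Quotient)

instance (n n' n'' : ℕ) (V : Submodule k (Polynomial k)) (hn' : n' ≤ n) (hn'' : n'' ≤ n)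
    (hV : ∀ p : Polynomial k, X ^ min n' n'' ∣ p → p ∈ V) :
    Algebra k (Aquot k n n' n'' V hn' hn'' hV) :=
  inferInstanceAs (Algebra k (Itsi k n n' n'' V hn' hn'' hV).ringCon.Quotient)

/-- The quotient map `T → A`. -/
def Amk (n n' n'' : ℕ) (V : Submodule k (Polynomial k)) (hn' : n' ≤ n) (hn'' : n'' ≤ n)
    (hV : ∀ p : Polynomial k, X ^ min n' n'' ∣ p → p ∈ V) :
    Tsub k →+* Aquot k n n' n'' V hn' hn'' hV :=
  RingCon.mk' (Itsi k n n' n'' V hn' hn'' hV).ringCon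


/-- Powers of a two-sided ideal of `T`: `J⁰ = ⊤` and `J^{n+1} = span (Jⁿ · J)`. -/
def tIdealPow (J : TwoSidedIdeal (Tsub k)) : ℕ → TwoSidedIdeal (Tsub k)
  | 0 => ⊤
  | n + 1 => TwoSidedIdeal.span {z : Tsub k | ∃ x ∈ tIdealPow J n, ∃ y ∈ J, z = x * y}

/-!
Write `Iₙ` for the right-hand side. Every element of `I_{m+1}` is a sum of four matrices
`βᵐq·E₁₂`, `β^{m-1}q·E₁₃`, `β^{m+1}q·E₂₂`, `βᵐq·E₂₃`, and each of these is a product of `m + 1`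
factors from `R` (`E₁₂ · (βE₂₂)ᵐ`, `E₁₂ · (βE₂₂)^{m-1} · E₂₃`, ...), so `I_{m+1} ⊆ R^{m+1}`.
Conversely `R ⊆ I₁` and `I_{m+1} · I₁ ⊆ I_{m+2}` are entrywise computations in upper triangular
matrices, which give `R^{m+1} ⊆ I_{m+1}` by induction.
-/

section Powers

variable {k}

lemma Tsub_mul_apply_00 (a b : Tsub k) : (a * b).1 0 0 = a.1 0 0 * b.1 0 0 := by
  simp [Matrix.mul_apply, Fin.sum_univ_three, Tsub_lower (a := b) 1 0 (by decide),
    Tsub_lower (a := b) 2 0 (by decide)]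

lemma Tsub_mul_apply_22 (a b : Tsub k) : (a * b).1 2 2 = a.1 2 2 * b.1 2 2 := by
  simp [Matrix.mul_apply, Fin.sum_univ_three, Tsub_lower (a := a) 2 0 (by decide),
    Tsub_lower (a := a) 2 1 (by decide)]

lemma Tsub_mul_apply_01 (a b : Tsub k) :
    (a * b).1 0 1 = a.1 0 0 * b.1 0 1 + a.1 0 1 * b.1 1 1 := by
  simp [Matrix.mul_apply, Fin.sum_univ_three, Tsub_lower (a := b) 2 1 (by decide)]

lemma Tsub_mul_apply_02 (a b : Tsub k) :
    (a * b).1 0 2 = a.1 0 0 * b.1 0 2 + a.1 0 1 * b.1 1 2 + a.1 0 2 * b.1 2 2 := by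
  simp [Matrix.mul_apply, Fin.sum_univ_three]

lemma Tsub_mul_apply_11 (a b : Tsub k) : (a * b).1 1 1 = a.1 1 1 * b.1 1 1 := by
  simp [Matrix.mul_apply, Fin.sum_univ_three, Tsub_lower (a := a) 1 0 (by decide),
    Tsub_lower (a := b) 2 1 (by decide)]

lemma Tsub_mul_apply_12 (a b : Tsub k) :
    (a * b).1 1 2 = a.1 1 1 * b.1 1 2 + a.1 1 2 * b.1 2 2 := by
  simp [Matrix.mul_apply, Fin.sum_univ_three, Tsub_lower (a := a) 1 0 (by decide)]

lemma tE12_mul_tE22 (p q : Polynomial k) : tE12 k p * tE22 k q = tE12 k (p * q) :=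
  Subtype.ext (Matrix.single_mul_single_same (i := 0) (j := 1) (c := p) 1 q)

lemma tE22_mul_tE22 (p q : Polynomial k) : tE22 k p * tE22 k q = tE22 k (p * q) :=
  Subtype.ext (Matrix.single_mul_single_same (i := 1) (j := 1) (c := p) 1 q)

lemma tE22_mul_tE23 (p q : Polynomial k) : tE22 k p * tE23 k q = tE23 k (p * q) :=
  Subtype.ext (Matrix.single_mul_single_same (i := 1) (j := 1) (c := p) 2 q)

lemma tE12_mul_tE23 (p q : Polynomial k) : tE12 k p * tE23 k q = tE13 k (p * q) :=
  Subtype.ext (Matrix.single_mul_single_same (i := 0) (j := 1) (c := p) 2 q)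

lemma eq_tE_sum_of_corners_eq_zero (M : Tsub k) (h00 : M.1 0 0 = 0) (h22 : M.1 2 2 = 0) :
    M = tE12 k (M.1 0 1) + tE13 k (M.1 0 2) + tE22 k (M.1 1 1) + tE23 k (M.1 1 2) := by
  apply Subtype.ext
  ext i j
  fin_cases i <;> fin_cases j <;>
    simp [tE12, tE13, tE22, tE23, Matrix.single, h00, h22,
      Tsub_lower (a := M) 1 0 (by decide), Tsub_lower (a := M) 2 0 (by decide),
      Tsub_lower (a := M) 2 1 (by decide)]

lemma mul_mem_tIdealPow_succ {J : TwoSidedIdeal (Tsub k)} {n : ℕ} {x y : Tsub k}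
    (hx : x ∈ tIdealPow k J n) (hy : y ∈ J) : x * y ∈ tIdealPow k J (n + 1) :=
  TwoSidedIdeal.subset_span ⟨x, hx, y, hy, rfl⟩

lemma mem_tIdealPow_one {J : TwoSidedIdeal (Tsub k)} {x : Tsub k} (hx : x ∈ J) :
    x ∈ tIdealPow k J 1 :=
  one_mul x ▸ mul_mem_tIdealPow_succ (TwoSidedIdeal.mem_top _) hx

variable (k) in
def arrowIdeal : TwoSidedIdeal (Tsub k) := TwoSidedIdeal.span {tE12 k 1, tE22 k X, tE23 k 1}

lemma tE12_mem_arrowIdeal (q : Polynomial k) : tE12 k q ∈ arrowIdeal k := by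
  rw [← one_mul q, ← tE12_mul_tE22]
  exact TwoSidedIdeal.mul_mem_right _ _ _ (TwoSidedIdeal.subset_span (by simp))

lemma tE22_X_mem_arrowIdeal : tE22 k X ∈ arrowIdeal k :=
  TwoSidedIdeal.subset_span (by simp)

lemma tE22_X_mul_mem_arrowIdeal (q : Polynomial k) : tE22 k (X * q) ∈ arrowIdeal k := by
  rw [← tE22_mul_tE22]
  exact TwoSidedIdeal.mul_mem_right _ _ _ tE22_X_mem_arrowIdeal

lemma tE23_mem_arrowIdeal (q : Polynomial k) : tE23 k q ∈ arrowIdeal k := by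
  rw [← mul_one q, ← tE22_mul_tE23]
  exact TwoSidedIdeal.mul_mem_left _ _ _ (TwoSidedIdeal.subset_span (by simp))

lemma tE13_mem_arrowIdeal (q : Polynomial k) : tE13 k q ∈ arrowIdeal k := by
  rw [← one_mul q, ← tE12_mul_tE23]
  exact TwoSidedIdeal.mul_mem_right _ _ _ (tE12_mem_arrowIdeal 1)

lemma tE22_mem_tIdealPow (m : ℕ) (q : Polynomial k) :
    tE22 k (X ^ (m + 1) * q) ∈ tIdealPow k (arrowIdeal k) (m + 1) := by
  induction m with
  | zero => simpa using mem_tIdealPow_one (tE22_X_mul_mem_arrowIdeal q)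
  | succ m ih =>
    rw [show X ^ (m + 2) * q = X ^ (m + 1) * q * X by ring, ← tE22_mul_tE22]
    exact mul_mem_tIdealPow_succ ih tE22_X_mem_arrowIdeal

lemma tE12_mem_tIdealPow (m : ℕ) (q : Polynomial k) :
    tE12 k (X ^ m * q) ∈ tIdealPow k (arrowIdeal k) (m + 1) := by
  induction m with
  | zero => simpa using mem_tIdealPow_one (tE12_mem_arrowIdeal q)
  | succ m ih =>
    rw [show X ^ (m + 1) * q = X ^ m * q * X by ring, ← tE12_mul_tE22]
    exact mul_mem_tIdealPow_succ ih tE22_X_mem_arrowIdeal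

lemma tE23_mem_tIdealPow (m : ℕ) (q : Polynomial k) :
    tE23 k (X ^ m * q) ∈ tIdealPow k (arrowIdeal k) (m + 1) := by
  cases m with
  | zero => simpa using mem_tIdealPow_one (tE23_mem_arrowIdeal q)
  | succ m =>
    rw [← mul_one (X ^ (m + 1) * q), ← tE22_mul_tE23]
    exact mul_mem_tIdealPow_succ (tE22_mem_tIdealPow m q) (tE23_mem_arrowIdeal 1)

lemma tE13_mem_tIdealPow (m : ℕ) (q : Polynomial k) :
    tE13 k (X ^ (m - 1) * q) ∈ tIdealPow k (arrowIdeal k) (m + 1) := by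
  cases m with
  | zero => simpa using mem_tIdealPow_one (tE13_mem_arrowIdeal q)
  | succ m =>
    rw [Nat.add_sub_cancel, ← mul_one (X ^ m * q), ← tE12_mul_tE23]
    exact mul_mem_tIdealPow_succ (tE12_mem_tIdealPow m q) (tE23_mem_arrowIdeal 1)

variable (k) in
def powIdeal (n : ℕ) : TwoSidedIdeal (Tsub k) :=
  Itsi k n (n - 1) (n - 1) (Bsub k (n - 2)) (Nat.sub_le n 1) (Nat.sub_le n 1)
    (fun _ hp => (pow_dvd_pow X (by omega)).trans hp)

lemma mem_powIdeal {n : ℕ} {M : Tsub k} :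
    M ∈ powIdeal k n ↔ M.1 0 0 = 0 ∧ M.1 2 2 = 0 ∧ X ^ (n - 1) ∣ M.1 0 1 ∧
      X ^ (n - 2) ∣ M.1 0 2 ∧ X ^ n ∣ M.1 1 1 ∧ X ^ (n - 1) ∣ M.1 1 2 := by
  unfold powIdeal Itsi
  exact (TwoSidedIdeal.mem_mk' _ _ _ _ _ _ M).trans Iff.rfl

lemma powIdeal_le_tIdealPow (m : ℕ) :
    powIdeal k (m + 1) ≤ tIdealPow k (arrowIdeal k) (m + 1) := by
  intro M hM
  obtain ⟨h00, h22, ⟨q01, h01⟩, ⟨q02, h02⟩, ⟨q11, h11⟩, ⟨q12, h12⟩⟩ := mem_powIdeal.mp hM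
  rw [eq_tE_sum_of_corners_eq_zero M h00 h22, h01, h02, h11, h12]
  exact add_mem (add_mem (add_mem (tE12_mem_tIdealPow m q01) (tE13_mem_tIdealPow m q02))
    (tE22_mem_tIdealPow m q11)) (tE23_mem_tIdealPow m q12)

lemma arrowIdeal_le_powIdeal_one : arrowIdeal k ≤ powIdeal k 1 := by
  refine TwoSidedIdeal.span_le.mpr ?_
  rintro _ (rfl | rfl | rfl) <;> simp [mem_powIdeal, tE12, tE22, tE23, Matrix.single]

lemma mul_mem_powIdeal_succ {m : ℕ} {x y : Tsub k} (hx : x ∈ powIdeal k (m + 1))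
    (hy : y ∈ powIdeal k 1) : x * y ∈ powIdeal k (m + 2) := by
  obtain ⟨hx00, -, hx01, -, hx11, -⟩ := mem_powIdeal.mp hx
  obtain ⟨-, hy22, -, -, hy11, -⟩ := mem_powIdeal.mp hy
  simp only [Nat.add_sub_cancel, pow_one] at hx01 hx11 hy11
  refine mem_powIdeal.mpr ⟨?_, ?_, ?_, ?_, ?_, ?_⟩
  · rw [Tsub_mul_apply_00, hx00, zero_mul]
  · rw [Tsub_mul_apply_22, hy22, mul_zero]
  · rw [Tsub_mul_apply_01, hx00, zero_mul, zero_add, show m + 2 - 1 = m + 1 from rfl,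
      pow_succ]
    exact mul_dvd_mul hx01 hy11
  · rw [Tsub_mul_apply_02, hx00, hy22]
    simpa using dvd_mul_of_dvd_left hx01 _
  · rw [Tsub_mul_apply_11, pow_succ]
    exact mul_dvd_mul hx11 hy11
  · rw [Tsub_mul_apply_12, hy22, mul_zero, add_zero, show m + 2 - 1 = m + 1 from rfl]
    exact dvd_mul_of_dvd_left hx11 _

lemma tIdealPow_le_powIdeal (m : ℕ) :
    tIdealPow k (arrowIdeal k) (m + 1) ≤ powIdeal k (m + 1) := by
  refine TwoSidedIdeal.span_le.mpr ?_
  rintro _ ⟨x, hx, y, hy, rfl⟩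
  cases m with
  | zero => exact TwoSidedIdeal.mul_mem_left _ _ _ (arrowIdeal_le_powIdeal_one hy)
  | succ m =>
    exact mul_mem_powIdeal_succ (tIdealPow_le_powIdeal m hx) (arrowIdeal_le_powIdeal_one hy)

lemma tIdealPow_arrowIdeal_eq (m : ℕ) :
    tIdealPow k (arrowIdeal k) (m + 1) = powIdeal k (m + 1) :=
  (tIdealPow_le_powIdeal m).antisymm (powIdeal_le_tIdealPow m)

end Powers

/-- description of the powers of the arrow ideal
`R = (E₁₂, β·E₂₂, E₂₃)` of `T`. -/
theorem stmt1 (n : ℕ) (hn : 1 ≤ n) (M : Tsub k) :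
    M ∈ tIdealPow k (TwoSidedIdeal.span {tE12 k 1, tE22 k X, tE23 k 1}) n ↔
      ((M : Matrix (Fin 3) (Fin 3) (Polynomial k)) 0 0 = 0 ∧
       (M : Matrix (Fin 3) (Fin 3) (Polynomial k)) 2 2 = 0 ∧
       (∀ i j : Fin 3, j < i → (M : Matrix (Fin 3) (Fin 3) (Polynomial k)) i j = 0) ∧
       X ^ (n - 1) ∣ (M : Matrix (Fin 3) (Fin 3) (Polynomial k)) 0 1 ∧
       X ^ (n - 2) ∣ (M : Matrix (Fin 3) (Fin 3) (Polynomial k)) 0 2 ∧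
       X ^ n ∣ (M : Matrix (Fin 3) (Fin 3) (Polynomial k)) 1 1 ∧
       X ^ (n - 1) ∣ (M : Matrix (Fin 3) (Fin 3) (Polynomial k)) 1 2) := by
  obtain ⟨m, rfl⟩ := Nat.exists_eq_add_of_le' hn
  change M ∈ tIdealPow k (arrowIdeal k) (m + 1) ↔ _
  rw [tIdealPow_arrowIdeal_eq, mem_powIdeal]
  have := Tsub_lower (a := M)
  tauto

end
end

section
/- Let e₁ ≥ e₂ ≥ 1 be integers, V a k-subspace of k[β] with (β^{e₂}) ⊆ V, and e a positive integer dividing both e₁ and e₂. Define 𝒟_{V,e} = {(A,B) ∈ k[β]² : e·B(0) = 0 in k and A·v + B·v′ ∈ V for all v ∈ V} and J = {(A,B) ∈ k[β]² : A ∈ k + (β^{e₂}) and B ∈ (β^{e₁})}. Then 𝒟_{V,e} is a k-subspace of k[β]² closed under the bracket [(A₁,B₁),(A₂,B₂)] = (B₁A₂′ − B₂A₁′, B₁B₂′ − B₂B₁′), J is contained in 𝒟_{V,e}, and [(A₁,B₁),(A₂,B₂)] ∈ J whenever (A₁,B₁) ∈ 𝒟_{V,e} and (A₂,B₂) ∈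 J. -/
open Polynomial Matrix

noncomputable section

variable (k : Type*) [Field k]

variable {k}

variable (k)

/-- The space `𝒟_{V,e}` of first-order differential operators `A + B·∂/∂β`
(coded as pairs `(A,B)`) with `e·B(0) = 0` preserving `V`. -/
def Dset (V : Submodule k (Polynomial k)) (e : ℕ) : Set (Polynomial k × Polynomial k) :=
  {P | (e : k) * P.2.eval 0 = 0 ∧ ∀ v ∈ V, P.1 * v + P.2 * derivative v ∈ V}

/-- The space `J = (k ⊕ (β^{e₂})) ⊕ (β^{e₁})·∂/∂β`. -/
def Jset (e₁ e₂ : ℕ) : Set (Polynomial k × Polynomial k) :=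
  {P | (∃ c₀ : k, X ^ e₂ ∣ P.1 - C c₀) ∧ X ^ e₁ ∣ P.2}

/-- The commutator bracket of first-order differential operators. -/
def bracketOp (P Q : Polynomial k × Polynomial k) : Polynomial k × Polynomial k :=
  (P.2 * derivative Q.1 - Q.2 * derivative P.1, P.2 * derivative Q.2 - Q.2 * derivative P.2)

section

variable {R : Type*} [CommRing R]

def firstOrderOp (P : R[X] × R[X]) (v : R[X]) : R[X] :=
  P.1 * v + P.2 * derivative v

lemma firstOrderOp_add (P Q : R[X] × R[X]) (v : R[X]) :
    firstOrderOp (P + Q) v = firstOrderOp P v + firstOrderOp Q v := by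
  simp only [firstOrderOp, Prod.fst_add, Prod.snd_add]
  ring

lemma firstOrderOp_smul (c : R) (P : R[X] × R[X]) (v : R[X]) :
    firstOrderOp (c • P) v = c • firstOrderOp P v := by
  simp only [firstOrderOp, Prod.smul_fst, Prod.smul_snd, smul_eq_C_mul]
  ring

lemma X_dvd_C_mul_of_dvd {e n : ℕ} {g : R[X]} (hg : (e : R) * g.eval 0 = 0) (hen : e ∣ n) :
    X ∣ C (n : R) * g := by
  obtain ⟨m, rfl⟩ := hen
  rw [X_dvd_iff, coeff_zero_eq_eval_zero, eval_mul, eval_C]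
  push_cast
  linear_combination (m : R) * hg

/-- Differentiating `f ∈ (β^n)` costs one power of `β`, which `g` restores when `β ∣ n·g`. -/
lemma X_pow_dvd_mul_derivative {n : ℕ} {f g : R[X]} (hf : X ^ n ∣ f) (hg : X ∣ C (n : R) * g) :
    X ^ n ∣ g * derivative f := by
  obtain ⟨a, rfl⟩ := hf
  obtain ⟨u, hu⟩ := hg
  rcases Nat.eq_zero_or_pos n with rfl | hn
  · simp
  have hXn : (X : R[X]) ^ n = X * X ^ (n - 1) := by rw [← pow_succ', Nat.sub_add_cancel hn]
  have expand : g * derivative (X ^ n * a) = X ^ n * (u * a + g * derivative a) := by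
    rw [derivative_mul, derivative_X_pow, hXn]
    linear_combination X ^ (n - 1) * a * hu
  exact ⟨_, expand⟩

end

section

variable {k}

lemma firstOrderOp_bracketOp (P Q : k[X] × k[X]) (v : k[X]) :
    firstOrderOp (bracketOp k P Q) v =
      firstOrderOp P (firstOrderOp Q v) - firstOrderOp Q (firstOrderOp P v) := by
  simp only [firstOrderOp, bracketOp, derivative_add, derivative_mul]
  ring

def dSubmodule (V : Submodule k k[X]) (e : ℕ) : Submodule k (k[X] × k[X]) where
  carrier := Dset k V e
  zero_mem' := ⟨by simp, fun v hv => by simp⟩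
  add_mem' := by
    rintro P Q ⟨hP₀, hPV⟩ ⟨hQ₀, hQV⟩
    refine ⟨?_, fun v hv => ?_⟩
    · simp only [Prod.snd_add, eval_add]
      linear_combination hP₀ + hQ₀
    · show firstOrderOp (P + Q) v ∈ V
      rw [firstOrderOp_add]
      exact V.add_mem (hPV v hv) (hQV v hv)
  smul_mem' := by
    rintro c P ⟨hP₀, hPV⟩
    refine ⟨?_, fun v hv => ?_⟩
    · simp only [Prod.smul_snd, smul_eq_C_mul, eval_mul, eval_C]
      linear_combination c * hP₀
    · show firstOrderOp (c • P) v ∈ V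
      rw [firstOrderOp_smul]
      exact V.smul_mem c (hPV v hv)

lemma bracketOp_mem_Dset {V : Submodule k k[X]} {e : ℕ} {P Q : k[X] × k[X]}
    (hP : P ∈ Dset k V e) (hQ : Q ∈ Dset k V e) : bracketOp k P Q ∈ Dset k V e := by
  obtain ⟨hP₀, hPV⟩ := hP
  obtain ⟨hQ₀, hQV⟩ := hQ
  refine ⟨?_, fun v hv => ?_⟩
  · simp only [bracketOp, eval_sub, eval_mul]
    linear_combination (derivative Q.2).eval 0 * hP₀ - (derivative P.2).eval 0 * hQ₀
  · show firstOrderOp (bracketOp k P Q) v ∈ V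
    rw [firstOrderOp_bracketOp]
    exact V.sub_mem (hPV _ (hQV v hv)) (hQV _ (hPV v hv))

/-- Modulo `(β^{e₂})`, an element `(c₀ + a, b)` of `J` acts on `V` as the scalar `c₀`. -/
lemma Jset_subset_Dset {V : Submodule k k[X]} {e₁ e₂ e : ℕ} (h21 : e₂ ≤ e₁) (he₁ : e₁ ≠ 0)
    (hV : ∀ p : k[X], X ^ e₂ ∣ p → p ∈ V) : Jset k e₁ e₂ ⊆ Dset k V e := by
  rintro P ⟨⟨c₀, hA⟩, hB⟩
  refine ⟨?_, fun v hv => ?_⟩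
  · have hB₀ : X ∣ P.2 := (dvd_pow_self X he₁).trans hB
    rw [X_dvd_iff, coeff_zero_eq_eval_zero] at hB₀
    rw [hB₀, mul_zero]
  · have hsplit : P.1 * v + P.2 * derivative v =
        c₀ • v + ((P.1 - C c₀) * v + P.2 * derivative v) := by
      rw [smul_eq_C_mul]
      ring
    rw [hsplit]
    exact V.add_mem (V.smul_mem c₀ hv)
      (hV _ (dvd_add (hA.mul_right v) (((pow_dvd_pow X h21).trans hB).mul_right _)))

lemma bracketOp_mem_Jset {e₁ e₂ e : ℕ} (h21 : e₂ ≤ e₁) (hee₁ : e ∣ e₁) (hee₂ : e ∣ e₂)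
    {P Q : k[X] × k[X]} (hP : (e : k) * P.2.eval 0 = 0) (hQ : Q ∈ Jset k e₁ e₂) :
    bracketOp k P Q ∈ Jset k e₁ e₂ := by
  obtain ⟨⟨c₀, hA⟩, hB⟩ := hQ
  refine ⟨⟨0, ?_⟩, ?_⟩
  · have hdA : derivative Q.1 = derivative (Q.1 - C c₀) := by
      rw [derivative_sub, derivative_C, sub_zero]
    rw [map_zero, sub_zero]
    exact dvd_sub (hdA ▸ X_pow_dvd_mul_derivative hA (X_dvd_C_mul_of_dvd hP hee₂))
      (((pow_dvd_pow X h21).trans hB).mul_right _)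
  · exact dvd_sub (X_pow_dvd_mul_derivative hB (X_dvd_C_mul_of_dvd hP hee₁)) (hB.mul_right _)

end

theorem stmt7 (e₁ e₂ e : ℕ) (h21 : e₂ ≤ e₁) (h12 : 1 ≤ e₂)
    (V : Submodule k (Polynomial k)) (hV : ∀ p : Polynomial k, X ^ e₂ ∣ p → p ∈ V)
    (hee₁ : e ∣ e₁) (hee₂ : e ∣ e₂) :
    (0 : Polynomial k × Polynomial k) ∈ Dset k V e ∧
    (∀ P Q, P ∈ Dset k V e → Q ∈ Dset k V e → P + Q ∈ Dset k V e) ∧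
    (∀ (c : k) P, P ∈ Dset k V e → c • P ∈ Dset k V e) ∧
    (∀ P Q, P ∈ Dset k V e → Q ∈ Dset k V e → bracketOp k P Q ∈ Dset k V e) ∧
    Jset k e₁ e₂ ⊆ Dset k V e ∧
    (∀ P Q, P ∈ Dset k V e → Q ∈ Jset k e₁ e₂ → bracketOp k P Q ∈ Jset k e₁ e₂) :=
  ⟨(dSubmodule V e).zero_mem, fun _ _ => (dSubmodule V e).add_mem,
    fun c _ => (dSubmodule V e).smul_mem c, fun _ _ => bracketOp_mem_Dset,
    Jset_subset_Dset h21 (by omega) hV,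
    fun _ _ hP => bracketOp_mem_Jset h21 hee₁ hee₂ hP.1⟩

end
end

section
/- Let m ≥ 1 be an integer and V a k-subspace of k[β] with (β^m) ⊆ V, and set d = dim_k V/(β^m). Then dim_k W(V,m) ≥ d² + 2(m − 1) − d·m = (d − 2)(d + 2 − m) + 2. -/
open Polynomial Matrix

noncomputable section

variable (k : Type*) [Field k]

variable {k}

variable (k)

/-- The space `W(V,m)` of first-order differential operators `A + B·∂/∂β` with
`A(0) = B(0) = 0`, `deg A, deg B ≤ m − 1`, mapping `V` into itself. -/
def Wsub (m : ℕ) (V : Submodule k (Polynomial k)) :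
    Submodule k (Polynomial k × Polynomial k) where
  carrier := {P | P.1.coeff 0 = 0 ∧ P.2.coeff 0 = 0 ∧
      P.1.degree ≤ ((m - 1 : ℕ) : WithBot ℕ) ∧ P.2.degree ≤ ((m - 1 : ℕ) : WithBot ℕ) ∧
      ∀ v ∈ V, P.1 * v + P.2 * derivative v ∈ V}
  zero_mem' := by
    refine ⟨by simp, by simp, by simp, by simp, fun v hv => by simpa using V.zero_mem⟩
  add_mem' := by
    rintro P Q ⟨h1, h2, h3, h4, h5⟩ ⟨g1, g2, g3, g4, g5⟩
    refine ⟨by simp [h1, g1], by simp [h2, g2],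
      le_trans (Polynomial.degree_add_le _ _) (max_le h3 g3),
      le_trans (Polynomial.degree_add_le _ _) (max_le h4 g4), fun v hv => ?_⟩
    have : (P + Q).1 * v + (P + Q).2 * derivative v =
        (P.1 * v + P.2 * derivative v) + (Q.1 * v + Q.2 * derivative v) := by
      simp [add_mul]; ring
    rw [this]
    exact V.add_mem (h5 v hv) (g5 v hv)
  smul_mem' := by
    rintro c P ⟨h1, h2, h3, h4, h5⟩
    refine ⟨by simp [h1], by simp [h2],
      le_trans (Polynomial.degree_smul_le _ _) h3,
      le_trans (Polynomial.degree_smul_le _ _) h4, fun v hv => ?_⟩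
    have : (c • P).1 * v + (c • P).2 * derivative v =
        c • (P.1 * v + P.2 * derivative v) := by
      simp [smul_add, smul_mul_assoc]
    rw [this]
    exact V.smul_mem _ (h5 v hv)

/-!
Write `A = βp`, `B = βq` with `deg p, deg q < m - 1`. Since `β ∣ B`, the operator `A + B ∂` maps
`(β^m)` into `(β^m) ⊆ V`, so it induces a map `Φ(p, q) : V/(β^m) → k[β]/V`, linear in `(p, q)`,
and `(βp, βq) ∈ W(V,m)` whenever `Φ(p, q) = 0`. Rank–nullity for `Φ` gives
`dim W ≥ 2(m - 1) - d·c` with `c = dim k[β]/V`, and `c + d = dim k[β]/(β^m) ≤ m` gives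
`d·c ≤ d(m - d)`.
-/

open Module

namespace Submodule

variable {K M : Type*} [DivisionRing K] [AddCommGroup M] [Module K M] {S T : Submodule K M}

def quotientComapSubtypeEquivMapMkQ (S T : Submodule K M) :
    (T ⧸ S.comap T.subtype) ≃ₗ[K] T.map S.mkQ :=
  (quotEquivOfEq _ _ (by rw [LinearMap.ker_comp, ker_mkQ])).trans
    ((S.mkQ ∘ₗ T.subtype).quotKerEquivRange.trans
      (LinearEquiv.ofEq _ _ (by rw [LinearMap.range_comp, range_subtype])))

lemma finite_quotient_of_le (h : S ≤ T) [Module.Finite K (M ⧸ S)] : Module.Finite K (M ⧸ T) :=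
  Module.Finite.equiv (quotientQuotientEquivQuotient S T h)

instance [Module.Finite K (M ⧸ S)] : Module.Finite K (T ⧸ S.comap T.subtype) :=
  Module.Finite.equiv (quotientComapSubtypeEquivMapMkQ S T).symm

lemma finrank_quotient_add_finrank_quotient_comap (h : S ≤ T) [Module.Finite K (M ⧸ S)] :
    finrank K (M ⧸ T) + finrank K (T ⧸ S.comap T.subtype) = finrank K (M ⧸ S) := by
  rw [← (quotientQuotientEquivQuotient S T h).finrank_eq,
    (quotientComapSubtypeEquivMapMkQ S T).finrank_eq, finrank_quotient_add_finrank]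

end Submodule

namespace Polynomial

variable {k}

lemma finrank_degreeLT (n : ℕ) : finrank k (degreeLT k n) = n := by
  rw [finrank_eq_card_basis (degreeLT.basis k n), Fintype.card_fin]

lemma Bsub_sup_degreeLT (m : ℕ) : Bsub k m ⊔ degreeLT k m = ⊤ := by
  refine eq_top_iff.mpr fun p _ => ?_
  have hmod : p %ₘ X ^ m ∈ degreeLT k m := by
    rw [mem_degreeLT, ← degree_X_pow (R := k) m]
    exact degree_modByMonic_lt p (monic_X_pow m)
  have hdiv : X ^ m * (p /ₘ X ^ m) ∈ Bsub k m := dvd_mul_right _ _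
  simpa [modByMonic_eq_sub_mul_div] using Submodule.add_mem_sup hdiv hmod

lemma surjective_mkQ_Bsub_comp_degreeLT (m : ℕ) :
    Function.Surjective ((Bsub k m).mkQ ∘ₗ (degreeLT k m).subtype) := by
  rw [← LinearMap.range_eq_top, LinearMap.range_comp, Submodule.range_subtype,
    Submodule.map_mkQ_eq_top, Bsub_sup_degreeLT]

instance (m : ℕ) : Module.Finite k (k[X] ⧸ Bsub k m) :=
  Module.Finite.of_surjective _ (surjective_mkQ_Bsub_comp_degreeLT m)

lemma finrank_quotient_Bsub_le (m : ℕ) : finrank k (k[X] ⧸ Bsub k m) ≤ m := by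
  simpa only [finrank_degreeLT] using
    LinearMap.finrank_le_finrank_of_surjective (surjective_mkQ_Bsub_comp_degreeLT (k := k) m)

lemma X_pow_dvd_mul_derivative {m : ℕ} {B v : k[X]} (hB : X ∣ B) (hv : X ^ m ∣ v) :
    X ^ m ∣ B * derivative v :=
  (pow_dvd_pow X (by omega : m ≤ m - 1 + 1)).trans <| by
    rw [pow_succ']
    exact mul_dvd_mul hB (pow_sub_one_dvd_derivative_of_pow_dvd hv)

lemma degree_X_mul_le_of_mem_degreeLT {n : ℕ} {p : k[X]} (hp : p ∈ degreeLT k n) :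
    (X * p).degree ≤ (n : WithBot ℕ) := by
  rw [mul_comm, degree_mul_X]
  exact Nat.WithBot.add_one_le_of_lt (mem_degreeLT.mp hp)

variable (k) in
def firstOrderOp : k[X] × k[X] →ₗ[k] k[X] →ₗ[k] k[X] :=
  LinearMap.mk₂ k (fun P v => P.1 * v + P.2 * derivative v)
    (fun P Q v => by simp only [Prod.fst_add, Prod.snd_add]; ring)
    (fun c P v => by simp only [Prod.smul_fst, Prod.smul_snd, smul_add, smul_mul_assoc])
    (fun P v w => by simp only [derivative_add]; ring)
    (fun c P v => by simp only [derivative_smul, smul_add, mul_smul_comm])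

end Polynomial

section FirstOrderOperators

variable {k} {m : ℕ} {V : Submodule k k[X]}

variable (k m) in
def mulXPair : (degreeLT k (m - 1) × degreeLT k (m - 1)) →ₗ[k] k[X] × k[X] :=
  let mulX := LinearMap.mulLeft k (X : k[X]) ∘ₗ (degreeLT k (m - 1)).subtype
  mulX.prodMap mulX

lemma mulXPair_apply (P : degreeLT k (m - 1) × degreeLT k (m - 1)) :
    mulXPair k m P = (X * (P.1 : k[X]), X * (P.2 : k[X])) := rfl

lemma mulXPair_injective : Function.Injective (mulXPair k m) := by
  intro P Q h
  simp only [mulXPair_apply, Prod.mk.injEq, mul_right_inj' X_ne_zero] at h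
  exact Prod.ext (Subtype.ext h.1) (Subtype.ext h.2)

lemma firstOrderOp_mulXPair_mem (hV : Bsub k m ≤ V) (P : degreeLT k (m - 1) × degreeLT k (m - 1))
    {v : k[X]} (hv : X ^ m ∣ v) : firstOrderOp k (mulXPair k m P) v ∈ V :=
  hV (dvd_add (dvd_mul_of_dvd_right hv _) (X_pow_dvd_mul_derivative (dvd_mul_right _ _) hv))

def firstOrderOpQuot (hV : Bsub k m ≤ V) :
    (degreeLT k (m - 1) × degreeLT k (m - 1)) →ₗ[k]
      (V ⧸ (Bsub k m).comap V.subtype) →ₗ[k] k[X] ⧸ V where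
  toFun P := ((Bsub k m).comap V.subtype).liftQ
    (V.mkQ ∘ₗ firstOrderOp k (mulXPair k m P) ∘ₗ V.subtype)
    fun v hv => (Submodule.Quotient.mk_eq_zero V).mpr (firstOrderOp_mulXPair_mem hV P hv)
  map_add' P Q := by
    ext v; exact congrArg V.mkQ (by simp only [map_add, LinearMap.add_comp, LinearMap.add_apply])
  map_smul' c P := by
    ext v; exact congrArg V.mkQ (by simp only [map_smul, LinearMap.smul_comp, LinearMap.smul_apply,
      RingHom.id_apply])

lemma firstOrderOpQuot_mk (hV : Bsub k m ≤ V) (P : degreeLT k (m - 1) × degreeLT k (m - 1))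
    (v : V) : firstOrderOpQuot hV P (Submodule.Quotient.mk v) =
      Submodule.Quotient.mk (firstOrderOp k (mulXPair k m P) v) := rfl

lemma mulXPair_mem_Wsub (hV : Bsub k m ≤ V) {P : degreeLT k (m - 1) × degreeLT k (m - 1)}
    (hP : P ∈ LinearMap.ker (firstOrderOpQuot hV)) : mulXPair k m P ∈ Wsub k m V := by
  refine ⟨coeff_X_mul_zero _, coeff_X_mul_zero _, degree_X_mul_le_of_mem_degreeLT P.1.2,
    degree_X_mul_le_of_mem_degreeLT P.2.2, fun v hv => ?_⟩
  have h := LinearMap.congr_fun (LinearMap.mem_ker.mp hP) (Submodule.Quotient.mk ⟨v, hv⟩)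
  rwa [firstOrderOpQuot_mk, LinearMap.zero_apply, Submodule.Quotient.mk_eq_zero] at h

lemma Wsub_le_range_prodMap_degreeLT :
    Wsub k m V ≤ LinearMap.range
      ((degreeLT k (m - 1 + 1)).subtype.prodMap (degreeLT k (m - 1 + 1)).subtype) := by
  intro P hP
  simp only [LinearMap.range_prodMap, Submodule.range_subtype, Submodule.mem_prod,
    degreeLT_succ_eq_degreeLE, mem_degreeLE]
  exact ⟨hP.2.2.1, hP.2.2.2.1⟩

instance : Module.Finite k (Wsub k m V) :=
  Module.Finite.of_injective _ (Submodule.inclusion_injective Wsub_le_range_prodMap_degreeLT)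

end FirstOrderOperators

section Count

variable {k} {m : ℕ} {V : Submodule k k[X]}

lemma finrank_quotient_add_finrank_quotient_Bsub_le (hV : Bsub k m ≤ V) :
    finrank k (k[X] ⧸ V) + finrank k (V ⧸ (Bsub k m).comap V.subtype) ≤ m :=
  (Submodule.finrank_quotient_add_finrank_quotient_comap hV).trans_le (finrank_quotient_Bsub_le m)

lemma two_mul_sub_one_le_finrank_Wsub_add_mul (hV : Bsub k m ≤ V) :
    2 * (m - 1) ≤ finrank k (Wsub k m V) +
      finrank k (V ⧸ (Bsub k m).comap V.subtype) * finrank k (k[X] ⧸ V) := by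
  have := Submodule.finite_quotient_of_le hV
  set Φ := firstOrderOpQuot hV
  have hrank : finrank k (LinearMap.range Φ) + finrank k (LinearMap.ker Φ) = 2 * (m - 1) := by
    rw [LinearMap.finrank_range_add_finrank_ker, finrank_prod, finrank_degreeLT, two_mul]
  have hrange : finrank k (LinearMap.range Φ) ≤
      finrank k (V ⧸ (Bsub k m).comap V.subtype) * finrank k (k[X] ⧸ V) :=
    (Submodule.finrank_le _).trans (finrank_linearMap k k _ _).le
  have hker : finrank k (LinearMap.ker Φ) ≤ finrank k (Wsub k m V) :=
    LinearMap.finrank_le_finrank_of_injective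
      (f := (mulXPair k m ∘ₗ (LinearMap.ker Φ).subtype).codRestrict (Wsub k m V)
        fun P => mulXPair_mem_Wsub hV P.2)
      fun P Q h => Subtype.ext (mulXPair_injective (congrArg Subtype.val h))
  linarith

end Count

theorem stmt10 (m : ℕ) (V : Submodule k (Polynomial k))
    (hV : ∀ p : Polynomial k, X ^ m ∣ p → p ∈ V)
    (d : ℕ) (hd : d = Module.finrank k
      (↥V ⧸ (Submodule.comap V.subtype (Bsub k m)))) :
    (d : ℤ) ^ 2 + 2 * ((m : ℤ) - 1) - d * m = ((d : ℤ) - 2) * ((d : ℤ) + 2 - m) + 2 ∧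
    (d : ℤ) ^ 2 + 2 * ((m : ℤ) - 1) - d * m ≤
      (Module.finrank k ↥(Wsub k m V) : ℤ) := by
  have hBV : Bsub k m ≤ V := hV
  have hW := two_mul_sub_one_le_finrank_Wsub_add_mul hBV
  have hcd := finrank_quotient_add_finrank_quotient_Bsub_le hBV
  rw [← hd] at hW hcd
  refine ⟨by ring, ?_⟩
  have hcast : (m : ℤ) - 1 ≤ ((m - 1 : ℕ) : ℤ) := by omega
  zify at hW hcd
  linarith [mul_le_mul_of_nonneg_left hcd (Int.natCast_nonneg d)]

end
end

section
/- Let m ≥ 1 be an integer with (m−1)!·1 ≠ 0 in k and let Y ⊆ k be a finite subset of cardinality μ. Then the images of the truncated exponentials E_m(y), y ∈ Y, in the quotient ring k[β]/(β^m) span a k-subspace of dimension exactly min(m, μ). -/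
open Polynomial Matrix

noncomputable section

variable (k : Type*) [Field k]

variable {k}

variable (k)

/-- The truncated exponential `e^{yβ} mod β^m`. -/
def Em (m : ℕ) (y : k) : Polynomial k :=
  ∑ ν ∈ Finset.range m, C ((ν.factorial : k)⁻¹ * y ^ ν) * X ^ ν

lemma Em_coeff (m : ℕ) (y : k) (n : ℕ) :
    (Em k m y).coeff n = if n < m then ((n.factorial : k)⁻¹ * y ^ n) else 0 := by
  unfold Em
  rw [Polynomial.finset_sum_coeff]
  simp only [Polynomial.coeff_C_mul, Polynomial.coeff_X_pow, mul_ite, mul_one, mul_zero]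
  rw [Finset.sum_ite_eq (Finset.range m) n fun ν => (ν.factorial : k)⁻¹ * y ^ ν]
  simp [Finset.mem_range]

variable {k}

lemma Em_linearIndependent (m : ℕ) (hm : 1 ≤ m) (hfac : ((m - 1).factorial : k) ≠ 0)
    {ι : Type*} [Fintype ι] (y : ι → k) (hy : Function.Injective y)
    (hcard : Fintype.card ι ≤ m) :
    LinearIndependent k (fun i =>
      Ideal.Quotient.mk (Ideal.span {(X : Polynomial k) ^ m}) (Em k m (y i))) := by
  have hfacν : ∀ n, n < m → (n.factorial : k) ≠ 0 := by
    intro n hn h0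
    obtain ⟨t, ht⟩ := Nat.factorial_dvd_factorial (Nat.le_sub_one_of_lt hn)
    exact hfac (by rw [ht, Nat.cast_mul, h0, zero_mul])
  rw [Fintype.linearIndependent_iff]
  intro c hc
  set p : Polynomial k := ∑ i, c i • Em k m (y i) with hp
  have hcoeff : ∀ n, p.coeff n =
      if n < m then (n.factorial : k)⁻¹ * ∑ i, c i * y i ^ n else 0 := by
    intro n
    rw [hp, Polynomial.finset_sum_coeff]
    simp only [Polynomial.coeff_smul, Em_coeff, smul_ite, smul_zero, smul_eq_mul]
    split_ifs with h
    · rw [Finset.mul_sum]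
      exact Finset.sum_congr rfl fun i _ => by ring
    · simp
  have hdeg : p.degree < (m : ℕ) := by
    rw [Polynomial.degree_lt_iff_coeff_zero]
    intro n hn
    rw [hcoeff n, if_neg (by exact_mod_cast not_lt.mpr hn)]
  have hmkp : Ideal.Quotient.mk (Ideal.span {(X : Polynomial k) ^ m}) p = 0 := by
    have hmkp' : (Ideal.Quotient.mkₐ k (Ideal.span {(X : Polynomial k) ^ m})) p = 0 := by
      rw [hp, map_sum]
      simp only [_root_.map_smul, Ideal.Quotient.mkₐ_eq_mk]
      exact hc
    simpa only [Ideal.Quotient.mkₐ_eq_mk] using hmkp' 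
  have hdvd : (X : Polynomial k) ^ m ∣ p := by
    rw [← Ideal.mem_span_singleton, ← Ideal.Quotient.eq_zero_iff_mem]
    exact hmkp
  have hp0 : p = 0 := by
    by_contra hne
    have := Polynomial.degree_le_of_dvd hdvd hne
    rw [Polynomial.degree_X_pow] at this
    exact absurd (lt_of_le_of_lt this hdeg) (lt_irrefl _)
  have hsum : ∀ n, n < m → ∑ i, c i * y i ^ n = 0 := by
    intro n hn
    have h0 : p.coeff n = 0 := by rw [hp0, Polynomial.coeff_zero]
    rw [hcoeff n, if_pos hn] at h0
    rcases mul_eq_zero.mp h0 with h | h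
    · exact absurd h (inv_ne_zero (hfacν n hn)).elim
    · exact h
  -- Vandermonde argument
  set r := Fintype.card ι with hr
  set e := Fintype.equivFin ι with he
  set A : Matrix (Fin r) (Fin r) k := (vandermonde (y ∘ e.symm))ᵀ with hA
  have hdet : A.det ≠ 0 := by
    rw [hA, Matrix.det_transpose]
    exact Matrix.det_vandermonde_ne_zero_iff.mpr (hy.comp e.symm.injective)
  have hmul : A.mulVec (c ∘ e.symm) = 0 := by
    funext ν
    have : ∑ j : Fin r, y (e.symm j) ^ (ν : ℕ) * c (e.symm j) =
        ∑ i, y i ^ (ν : ℕ) * c i := Equiv.sum_comp e.symm fun i => y i ^ (ν : ℕ) * c i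
    simp only [Matrix.mulVec, dotProduct, hA, Matrix.transpose_apply,
      Matrix.vandermonde_apply, Function.comp_apply, Pi.zero_apply]
    rw [this, ← hsum (ν : ℕ) (lt_of_lt_of_le ν.isLt hcard)]
    exact Finset.sum_congr rfl fun i _ => mul_comm _ _
  have hunit : IsUnit A := (Matrix.isUnit_iff_isUnit_det A).mpr (IsUnit.mk0 _ hdet)
  have hinj := Matrix.mulVec_injective_iff_isUnit.mpr hunit
  have hcz : c ∘ e.symm = 0 := hinj (by rw [hmul, Matrix.mulVec_zero])
  intro i
  have := congrFun hcz (e i)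
  simpa using this

variable (k)

/-- the truncated exponentials `e^{yβ} mod β^m`, `y ∈ Y`, span a subspace
of dimension `min(m, #Y)` of `k[β]/(β^m)`. -/
theorem stmt13 (m : ℕ) (hm : 1 ≤ m) (hfac : ((m - 1).factorial : k) ≠ 0) (Y : Finset k) :
    Module.finrank k ↥(Submodule.span k
      ((fun y => Ideal.Quotient.mk (Ideal.span {(X : Polynomial k) ^ m}) (Em k m y)) '' ↑Y)) =
      min m Y.card := by
  have hX : ((X : Polynomial k) ^ m) ≠ 0 := pow_ne_zero _ Polynomial.X_ne_zero
  let pb : PowerBasis k (AdjoinRoot ((X : Polynomial k) ^ m)) := AdjoinRoot.powerBasis hX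
  have hfd : FiniteDimensional k (Polynomial k ⧸ Ideal.span {(X : Polynomial k) ^ m}) :=
    PowerBasis.finite pb
  have hfr : Module.finrank k (Polynomial k ⧸ Ideal.span {(X : Polynomial k) ^ m}) = m := by
    have h1 : Module.finrank k (AdjoinRoot ((X : Polynomial k) ^ m)) = m := by
      rw [PowerBasis.finrank pb]
      exact Polynomial.natDegree_X_pow m
    exact h1
  set v : k → Polynomial k ⧸ Ideal.span {(X : Polynomial k) ^ m} :=
    fun y => Ideal.Quotient.mk (Ideal.span {(X : Polynomial k) ^ m}) (Em k m y) with hv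
  have key : ∀ Z : Finset k, Z.card ≤ m →
      Module.finrank k ↥(Submodule.span k (v '' ↑Z)) = Z.card := by
    intro Z hZ
    have hli : LinearIndependent k (fun i : ↥Z => v ↑i) := by
      refine Em_linearIndependent m hm hfac (fun i : ↥Z => (i : k)) Subtype.val_injective ?_
      rwa [Fintype.card_coe]
    have him : v '' ↑Z = Set.range (fun i : ↥Z => v ↑i) := Set.image_eq_range v ↑Z
    rw [him, finrank_span_eq_card hli, Fintype.card_coe]
  rcases le_total Y.card m with h | h
  · rw [min_eq_right h]
    exact key Y h
  · rw [min_eq_left h]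
    obtain ⟨Y', hsub, hcard'⟩ := Finset.exists_subset_card_eq h
    have hle : Module.finrank k ↥(Submodule.span k (v '' ↑Y)) ≤ m := by
      have h2 := Submodule.finrank_le (Submodule.span k (v '' ↑Y))
      rwa [hfr] at h2
    have hge : m ≤ Module.finrank k ↥(Submodule.span k (v '' ↑Y)) := by
      have hmono : Submodule.span k (v '' ↑Y') ≤ Submodule.span k (v '' ↑Y) :=
        Submodule.span_mono (Set.image_mono (by exact_mod_cast hsub))
      calc m = Module.finrank k ↥(Submodule.span k (v '' ↑Y')) := by
                rw [key Y' (le_of_eq hcard'), hcard']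
        _ ≤ _ := Submodule.finrank_mono hmono
    exact le_antisymm hle hge

end
end

section
/- Let d, m be integers with d ≥ 3 and m ≥ 3d − 2, and suppose (m−1)!·1 ≠ 0 in k. Let Y ⊆ k be a finite subset of cardinality d whose difference set Y − Y = {y₁ − y₂ : y₁, y₂ ∈ Y} has the maximal cardinality 1 + 2·(d choose 2) = d² − d + 1. Let V = span_k{E_m(y) : y ∈ Y} + (β^m) ⊆ k[β]. Then there is no nonzero pair (A,B) of polynomials with A(0) = B(0) = 0, deg A < m, deg B < m and A·v + B·v′ ∈ V for all v ∈ V; that is, if A, B ∈ k[β] satisfy these conditions then A = B = 0. -/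
open Polynomial Matrix

noncomputable section

variable (k : Type*) [Field k]

variable {k}

variable (k)

/-! Modulo `β^m` the truncated exponentials multiply like exponentials, `E(y)E(z) ≡ E(y+z)`, and
since `β ∣ B` also `B·E(y)′ ≡ y·B·E(y)`. Applying the operator to `E(y)` and multiplying by `E(-y)`
therefore gives `A + yB ≡ ∑_{z ∈ Y} c_y(z) E(z - y)` for every `y ∈ Y`. For three distinct
`y₁, y₂, y₃ ∈ Y` the weights `(y₂ - y₃, y₃ - y₁, y₁ - y₂)` annihilate the affine family `A + yB`,
leaving a relation among at most `3d - 2 ≤ m` distinct exponentials `E(z - yᵢ)`; these are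
independent modulo `β^m` by a Vandermonde argument. Because every nonzero difference of elements
of `Y` arises from exactly one pair, each `c_{y₁}(z)` with `z ≠ y₁` is alone in its coefficient, so
it vanishes. Thus `A + yB` is congruent to a constant, which is `0` as `A(0) = B(0) = 0`; two values
of `y` give `A ≡ B ≡ 0`, and the degree bounds give `A = B = 0`. -/

theorem sum_filter_eq_zero_of_sum_mul_pow_eq_zero {K ι : Type*} [Field K] [DecidableEq K]
    (s : Finset ι) (w a : ι → K) (h : ∀ ν < (s.image w).card, ∑ j ∈ s, a j * w j ^ ν = 0)
    (x : K) : ∑ j ∈ s with w j = x, a j = 0 := by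
  by_cases hx : x ∈ s.image w
  swap
  · refine Finset.sum_eq_zero fun j hj => absurd ?_ hx
    obtain ⟨hjs, rfl⟩ := Finset.mem_filter.mp hj
    exact Finset.mem_image_of_mem w hjs
  set p := Lagrange.basis (s.image w) id x
  have hinj : Set.InjOn id (s.image w : Set K) := Set.injOn_id _
  have hp : p.natDegree < (s.image w).card := by
    rw [Lagrange.natDegree_basis hinj hx]
    exact Nat.sub_lt (Finset.card_pos.mpr ⟨x, hx⟩) one_pos
  have heval : ∀ j ∈ s, p.eval (w j) = if w j = x then 1 else 0 := by
    intro j hj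
    split_ifs with hjx
    · rw [hjx]
      exact Lagrange.eval_basis_self hinj hx
    · exact Lagrange.eval_basis_of_ne (v := id) (Ne.symm hjx) (Finset.mem_image_of_mem w hj)
  calc ∑ j ∈ s with w j = x, a j = ∑ j ∈ s, a j * p.eval (w j) := by
        rw [Finset.sum_filter]
        exact Finset.sum_congr rfl fun j hj => by rw [heval j hj, mul_ite, mul_one, mul_zero]
    _ = ∑ ν ∈ Finset.range (s.image w).card, p.coeff ν * ∑ j ∈ s, a j * w j ^ ν := by
        simp only [eval_eq_sum_range' hp, Finset.mul_sum]
        rw [Finset.sum_comm]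
        exact Finset.sum_congr rfl fun ν _ => Finset.sum_congr rfl fun j _ => by ring
    _ = 0 := Finset.sum_eq_zero fun ν hν => by rw [h ν (Finset.mem_range.mp hν), mul_zero]

open Pointwise in
theorem Finset.injOn_sub_offDiag_of_card_sub_eq {G : Type*} [AddGroup G] [DecidableEq G]
    {Y : Finset G} (h : (Y - Y).card = Y.card ^ 2 - Y.card + 1) :
    Set.InjOn (fun p : G × G => p.1 - p.2) Y.offDiag := by
  refine Finset.injOn_of_card_image_eq (le_antisymm Finset.card_image_le ?_)
  calc Y.offDiag.card = (Y - Y).card - 1 := by rw [offDiag_card, h, sq]; omega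
    _ ≤ ((Y - Y).erase 0).card := Finset.pred_card_le_card_erase
    _ ≤ _ := Finset.card_le_card fun x hx => by
        obtain ⟨hx0, hx⟩ := Finset.mem_erase.mp hx
        obtain ⟨a, ha, b, hb, rfl⟩ := Finset.mem_sub.mp hx
        exact Finset.mem_image_of_mem (fun p : G × G => p.1 - p.2) (s := Y.offDiag) (a := (a, b))
          (Finset.mem_offDiag.mpr ⟨ha, hb, fun hab => hx0 (sub_eq_zero.mpr hab)⟩)

open Finset in
theorem Finset.card_image_product_sub_le {G ι : Type*} [AddGroup G] [DecidableEq G] [Fintype ι]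
    {Y : Finset G} {y : ι → G} (hyY : ∀ i, y i ∈ Y) :
    ((univ ×ˢ Y).image fun p : ι × G => p.2 - y p.1).card ≤ Fintype.card ι * (#Y - 1) + 1 := by
  have hsub : (univ ×ˢ Y).image (fun p : ι × G => p.2 - y p.1) ⊆
      insert 0 (univ.biUnion fun i => (Y.erase (y i)).image (· - y i)) := by
    intro x hx
    obtain ⟨⟨i, z⟩, hp, rfl⟩ := mem_image.mp hx
    by_cases hz : z = y i
    · simp [hz]
    · exact mem_insert_of_mem (mem_biUnion.mpr ⟨i, mem_univ i,
        mem_image_of_mem _ (mem_erase.mpr ⟨hz, (mem_product.mp hp).2⟩)⟩)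
  calc _ ≤ #(univ.biUnion fun i => (Y.erase (y i)).image (· - y i)) + 1 :=
        (card_le_card hsub).trans (card_insert_le _ _)
    _ ≤ ∑ i, #(Y.erase (y i)) + 1 := by
        gcongr
        exact card_biUnion_le.trans (sum_le_sum fun i _ => card_image_le)
    _ = Fintype.card ι * (#Y - 1) + 1 := by
        simp [card_erase_of_mem (hyY _)]

section TruncatedExp

variable {k} {m : ℕ}

theorem coeff_Em (m : ℕ) (y : k) (n : ℕ) :
    (Em k m y).coeff n = if n < m then (n.factorial : k)⁻¹ * y ^ n else 0 := by
  simp only [Em, finsetSum_coeff, coeff_C_mul, coeff_X_pow, mul_ite, mul_one, mul_zero,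
    Finset.sum_ite_eq, Finset.mem_range]

theorem Em_zero (hm : 0 < m) : Em k m 0 = 1 := by
  ext n
  rw [coeff_Em, coeff_one]
  rcases n with _ | n <;> simp [hm]

theorem natCast_factorial_ne_zero (hfac : ((m - 1).factorial : k) ≠ 0) {n : ℕ} (hn : n < m) :
    (n.factorial : k) ≠ 0 :=
  ne_zero_of_dvd_ne_zero hfac (Nat.cast_dvd_cast (Nat.factorial_dvd_factorial (by omega)))

theorem X_pow_dvd_Em_mul_Em_sub_Em_add (hfac : ((m - 1).factorial : k) ≠ 0) (y z : k) :
    X ^ m ∣ Em k m y * Em k m z - Em k m (y + z) := by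
  refine X_pow_dvd_iff.mpr fun n hn => ?_
  have hfac' (i : ℕ) (hi : i ≤ n) := natCast_factorial_ne_zero hfac (hi.trans_lt hn)
  rw [coeff_sub, coeff_mul, coeff_Em, if_pos hn, sub_eq_zero, add_pow, Finset.mul_sum,
    Finset.Nat.sum_antidiagonal_eq_sum_range_succ
      (fun i j => (Em k m y).coeff i * (Em k m z).coeff j)]
  refine Finset.sum_congr rfl fun i hi => ?_
  have hi : i ≤ n := Nat.lt_succ_iff.mp (Finset.mem_range.mp hi)
  rw [coeff_Em, coeff_Em, if_pos (by omega), if_pos (by omega)]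
  have hchoose : (n.factorial : k) = n.choose i * i.factorial * (n - i).factorial := by
    rw [← Nat.cast_mul, ← Nat.cast_mul, Nat.choose_mul_factorial_mul_factorial hi]
  field_simp [hfac' i hi, hfac' (n - i) (Nat.sub_le n i), hfac' n le_rfl]
  rw [hchoose]
  ring

theorem X_pow_dvd_derivative_Em_sub (hfac : ((m - 1).factorial : k) ≠ 0) (y : k) :
    X ^ (m - 1) ∣ derivative (Em k m y) - C y * Em k m y := by
  refine X_pow_dvd_iff.mpr fun n hn => ?_
  rw [coeff_sub, coeff_derivative, coeff_C_mul, coeff_Em, coeff_Em, if_pos (by omega),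
    if_pos (by omega), sub_eq_zero]
  have h := natCast_factorial_ne_zero hfac (show n + 1 < m by omega)
  rw [Nat.factorial_succ] at h ⊢
  push_cast at h ⊢
  have h1 : (n : k) + 1 ≠ 0 := left_ne_zero_of_mul h
  have h2 : (n.factorial : k) ≠ 0 := right_ne_zero_of_mul h
  field_simp
  ring

theorem sum_mul_pow_eq_zero_of_X_pow_dvd (hfac : ((m - 1).factorial : k) ≠ 0) {ι : Type*}
    (s : Finset ι) (w a : ι → k) (h : X ^ m ∣ ∑ j ∈ s, a j • Em k m (w j)) {ν : ℕ}
    (hν : ν < m) : ∑ j ∈ s, a j * w j ^ ν = 0 := by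
  have hcoeff := X_pow_dvd_iff.mp h ν hν
  simp only [finsetSum_coeff, coeff_smul, coeff_Em, if_pos hν, smul_eq_mul] at hcoeff
  have hν' := natCast_factorial_ne_zero hfac hν
  calc ∑ j ∈ s, a j * w j ^ ν = ν.factorial * ∑ j ∈ s, a j * ((ν.factorial : k)⁻¹ * w j ^ ν) := by
        rw [Finset.mul_sum]
        exact Finset.sum_congr rfl fun j _ => by field_simp
    _ = 0 := by rw [hcoeff, mul_zero]

end TruncatedExp

section Invariance

variable {k} {m : ℕ}

theorem exists_X_pow_dvd_sub_sum_of_mem_span_sup_Bsub {f : k → k[X]} {Y : Finset k} {p : k[X]}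
    (hp : p ∈ Submodule.span k (f '' ↑Y) ⊔ Bsub k m) :
    ∃ c : k → k, X ^ m ∣ p - ∑ z ∈ Y, c z • f z := by
  obtain ⟨u, hu, r, hr, rfl⟩ := Submodule.mem_sup.mp hp
  obtain ⟨c, rfl⟩ := (Submodule.mem_span_image_finset_iff_exists_fun' k).mp hu
  exact ⟨c, by rwa [add_sub_cancel_left]⟩

theorem exists_X_pow_dvd_add_C_mul_sub_sum_Em (hfac : ((m - 1).factorial : k) ≠ 0) (hm : 0 < m)
    {Y : Finset k} {A B : k[X]} (hB : X ∣ B) {y : k}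
    (hy : A * Em k m y + B * derivative (Em k m y) ∈ Submodule.span k (Em k m '' ↑Y) ⊔ Bsub k m) :
    ∃ c : k → k, X ^ m ∣ A + C y * B - ∑ z ∈ Y, c z • Em k m (z - y) := by
  obtain ⟨c, hc⟩ := exists_X_pow_dvd_sub_sum_of_mem_span_sup_Bsub hy
  refine ⟨c, ?_⟩
  have hder : X ^ m ∣ (A + C y * B) * Em k m y - (A * Em k m y + B * derivative (Em k m y)) := by
    have hXm : (X : k[X]) ^ m ∣ X * X ^ (m - 1) := by
      rw [← pow_succ']
      exact pow_dvd_pow X (by omega)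
    have := hXm.trans (mul_dvd_mul hB (X_pow_dvd_derivative_Em_sub hfac y))
    convert this.neg_right using 1
    ring
  set π := Ideal.Quotient.mkₐ k (Ideal.span {(X : k[X]) ^ m})
  have hπ (p q : k[X]) : X ^ m ∣ p - q ↔ π p = π q := by
    rw [Ideal.Quotient.mkₐ_eq_mk, Ideal.Quotient.eq, Ideal.mem_span_singleton]
  have hE (a b : k) : π (Em k m a) * π (Em k m b) = π (Em k m (a + b)) := by
    rw [← map_mul, ← hπ]
    exact X_pow_dvd_Em_mul_Em_sub_Em_add hfac a b
  rw [hπ]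
  calc π (A + C y * B) = π ((A + C y * B) * Em k m y) * π (Em k m (-y)) := by
        rw [map_mul, mul_assoc, hE, add_neg_cancel, Em_zero hm, map_one, mul_one]
    _ = π (∑ z ∈ Y, c z • Em k m z) * π (Em k m (-y)) := by
        rw [(hπ _ _).mp (by simpa using dvd_add hder hc)]
    _ = π (∑ z ∈ Y, c z • Em k m (z - y)) := by
        simp only [map_sum, map_smul, Finset.sum_mul, smul_mul_assoc, hE, sub_eq_add_neg]

theorem coeff_eq_zero_of_X_pow_dvd_sum_sum_Em [DecidableEq k] (hfac : ((m - 1).factorial : k) ≠ 0)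
    {ι : Type*} [Fintype ι] {Y : Finset k}
    (hY : Set.InjOn (fun p : k × k => p.1 - p.2) Y.offDiag) {y : ι → k}
    (hy : Function.Injective y) (hyY : ∀ i, y i ∈ Y) (hm : Fintype.card ι * (Y.card - 1) + 1 ≤ m)
    (a : ι → k → k) (h : X ^ m ∣ ∑ i, ∑ z ∈ Y, a i z • Em k m (z - y i)) :
    ∀ i, ∀ z ∈ Y, z ≠ y i → a i z = 0 := by
  intro i₀ z₀ hz₀ hne
  rw [← Finset.sum_product' Finset.univ Y] at h
  have hfiber := sum_filter_eq_zero_of_sum_mul_pow_eq_zero (Finset.univ ×ˢ Y)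
    (fun p => p.2 - y p.1) (fun p => a p.1 p.2)
    (fun ν hν => sum_mul_pow_eq_zero_of_X_pow_dvd hfac _ _ _ h
      (hν.trans_le ((Finset.card_image_product_sub_le hyY).trans hm))) (z₀ - y i₀)
  rwa [Finset.sum_filter, Finset.sum_eq_single (i₀, z₀), if_pos rfl] at hfiber
  · rintro ⟨i, z⟩ hp hne'
    refine if_neg fun heq => hne' ?_
    have hz : z ∈ Y := (Finset.mem_product.mp hp).2
    have hzi : z ≠ y i := fun h => hne (sub_eq_zero.mp (by simpa [h] using heq.symm))
    obtain ⟨rfl, hyi⟩ := Prod.ext_iff.mp <| hY (x₁ := (z, y i)) (x₂ := (z₀, y i₀))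
      (Finset.mem_offDiag.mpr ⟨hz, hyY i, hzi⟩) (Finset.mem_offDiag.mpr ⟨hz₀, hyY i₀, hne⟩) heq
    rw [hy hyi]
  · exact fun h => absurd (Finset.mem_product.mpr ⟨Finset.mem_univ _, hz₀⟩) h

theorem X_pow_dvd_of_X_pow_dvd_sub_sum_Em (hm : 0 < m) {Y : Finset k} {p : k[X]}
    (hp : p.coeff 0 = 0) {y : k} (hy : y ∈ Y) {c : k → k}
    (hc : X ^ m ∣ p - ∑ z ∈ Y, c z • Em k m (z - y)) (hc0 : ∀ z ∈ Y, z ≠ y → c z = 0) :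
    X ^ m ∣ p := by
  rw [Finset.sum_eq_single_of_mem y hy fun z hz hne => by rw [hc0 z hz hne, zero_smul],
    sub_self, Em_zero hm, smul_eq_C_mul, mul_one] at hc
  have hcy : c y = 0 := by
    simpa [hp] using X_pow_dvd_iff.mp hc 0 hm
  rwa [hcy, map_zero, sub_zero] at hc

theorem X_pow_dvd_add_C_mul [DecidableEq k] (hfac : ((m - 1).factorial : k) ≠ 0) {Y : Finset k}
    (hY : Set.InjOn (fun p : k × k => p.1 - p.2) Y.offDiag) (hY3 : 3 ≤ Y.card)
    (hm : 3 * Y.card - 2 ≤ m) {A B : k[X]} (hA : A.coeff 0 = 0) (hB : B.coeff 0 = 0)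
    (c : k → k → k) (hc : ∀ y ∈ Y, X ^ m ∣ A + C y * B - ∑ z ∈ Y, c y z • Em k m (z - y))
    {y₁ : k} (hy₁ : y₁ ∈ Y) : X ^ m ∣ A + C y₁ * B := by
  obtain ⟨y₂, hy₂, y₃, hy₃, h21, h31, h32⟩ :
      ∃ y₂ ∈ Y, ∃ y₃ ∈ Y, y₂ ≠ y₁ ∧ y₃ ≠ y₁ ∧ y₃ ≠ y₂ := by
    obtain ⟨y₂, hy₂, y₃, hy₃, h32⟩ := Finset.one_lt_card.mp
      (show 1 < (Y.erase y₁).card by rw [Finset.card_erase_of_mem hy₁]; omega)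
    exact ⟨y₂, Finset.mem_of_mem_erase hy₂, y₃, Finset.mem_of_mem_erase hy₃,
      Finset.ne_of_mem_erase hy₂, Finset.ne_of_mem_erase hy₃, Ne.symm h32⟩
  let y : Fin 3 → k := ![y₁, y₂, y₃]
  let l : Fin 3 → k := ![y₂ - y₃, y₃ - y₁, y₁ - y₂]
  have hyY : ∀ i, y i ∈ Y := by
    intro i; fin_cases i <;> assumption
  have hy : Function.Injective y := by
    intro i j hij; fin_cases i <;> fin_cases j <;> simp_all [y, eq_comm]
  have hcomb : X ^ m ∣ ∑ i, ∑ z ∈ Y, (l i * c (y i) z) • Em k m (z - y i) := by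
    have hl : ∑ i, C (l i) * (A + C (y i) * B) = 0 := by
      simp only [Fin.sum_univ_three, y, l, Matrix.cons_val_zero, Matrix.cons_val_one,
        Matrix.cons_val_two, Matrix.head_cons, Matrix.tail_cons, map_sub]
      ring
    have hdvd : X ^ m ∣ ∑ i, C (l i) * (A + C (y i) * B - ∑ z ∈ Y, c (y i) z • Em k m (z - y i)) :=
      Finset.dvd_sum fun i _ => (hc _ (hyY i)).mul_left _
    convert hdvd.neg_right using 1
    simp_rw [mul_smul, ← Finset.smul_sum, smul_eq_C_mul (l _)]
    simp only [Fin.sum_univ_three] at hl ⊢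
    linear_combination hl
  have hcoeff := coeff_eq_zero_of_X_pow_dvd_sum_sum_Em hfac hY hy hyY (by simp; omega) _ hcomb 0
  refine X_pow_dvd_of_X_pow_dvd_sub_sum_Em (by omega) (by simp [hA, hB]) hy₁ (hc y₁ hy₁)
    fun z hz hne => (mul_eq_zero.mp (hcoeff z hz hne)).resolve_left (sub_ne_zero.mpr h32.symm)

theorem eq_zero_of_X_pow_dvd_add_C_mul {A B : k[X]} {y₁ y₂ : k} (hy : y₁ ≠ y₂)
    (hA : A.degree < m) (hB : B.degree < m) (h₁ : X ^ m ∣ A + C y₁ * B)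
    (h₂ : X ^ m ∣ A + C y₂ * B) : A = 0 ∧ B = 0 := by
  have hXB : X ^ m ∣ B := by
    have hunit : IsUnit (C (y₁ - y₂)) := isUnit_C.mpr (sub_ne_zero.mpr hy).isUnit
    rw [← hunit.dvd_mul_left]
    convert dvd_sub h₁ h₂ using 1
    rw [map_sub]
    ring
  have hB0 : B = 0 := eq_zero_of_dvd_of_degree_lt hXB (by rwa [degree_X_pow])
  refine ⟨eq_zero_of_dvd_of_degree_lt ?_ (by rwa [degree_X_pow]), hB0⟩
  simpa [hB0] using h₁

end Invariance

open Pointwise in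
/-- for generic exponentials (difference set of `Y` of maximal size),
no nonzero first-order operator `A + B·∂/∂β` with `A(0) = B(0) = 0`, `deg A, deg B < m`
preserves `V = span{e^{yβ} : y ∈ Y} + (β^m)`. -/
theorem stmt14 [DecidableEq k] (d m : ℕ) (hd : 3 ≤ d) (hm : 3 * d - 2 ≤ m)
    (hfac : ((m - 1).factorial : k) ≠ 0)
    (Y : Finset k) (hYcard : Y.card = d) (hYY : (Y - Y).card = d ^ 2 - d + 1)
    (A B : Polynomial k) (hA0 : A.eval 0 = 0) (hB0 : B.eval 0 = 0)
    (hAdeg : A.degree < (m : ℕ)) (hBdeg : B.degree < (m : ℕ))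
    (hpres : ∀ v ∈ Submodule.span k ((Em k m) '' ↑Y) ⊔ Bsub k m,
      A * v + B * derivative v ∈ Submodule.span k ((Em k m) '' ↑Y) ⊔ Bsub k m) :
    A = 0 ∧ B = 0 := by
  subst hYcard
  have hY := Finset.injOn_sub_offDiag_of_card_sub_eq hYY
  rw [← coeff_zero_eq_eval_zero] at hA0 hB0
  have hEm : ∀ y ∈ Y, Em k m y ∈ Submodule.span k ((Em k m) '' ↑Y) ⊔ Bsub k m :=
    fun y hy => Submodule.mem_sup_left (Submodule.subset_span ⟨y, hy, rfl⟩)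
  choose! c hc using fun y (hy : y ∈ Y) => exists_X_pow_dvd_add_C_mul_sub_sum_Em hfac
    (by omega) (X_dvd_iff.mpr hB0) (hpres _ (hEm y hy))
  obtain ⟨y₁, hy₁, y₂, hy₂, hne⟩ := Finset.one_lt_card.mp (show 1 < Y.card by omega)
  exact eq_zero_of_X_pow_dvd_add_C_mul hne hAdeg hBdeg
    (X_pow_dvd_add_C_mul hfac hY hd hm hA0 hB0 c hc hy₁)
    (X_pow_dvd_add_C_mul hfac hY hd hm hA0 hB0 c hc hy₂)
end
end

section
/- Let m ≥ 2 be an integer and let V be a k-subspace of k[β] with (β^m) ⊆ V of the form V = k·p₁ + V₂ + (β^m), where p₁ is a nonzero polynomial of order ν₁ (i.e. β^{ν₁} divides p₁ but β^{ν₁+1} does not), V₂ is a k-subspace every nonzero element of which has order at least ν₂, and ν₁ < ν₂. Then dim_k W(V,m) ≥ 2m − max(1, ν₁, m − ν₂ + 1) − max(1, m − ν₁). In particular, if W(V,m) = 0 then ν₁ = 0 and ν₂ = 1. -/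
open Polynomial Matrix

noncomputable section

variable (k : Type*) [Field k]

variable {k}

variable (k)

/-!
Two explicit families of operators lie in `W(V,m)`. For `max(1, m - ν₁) ≤ a < m`, multiplication
by `β^a` sends all of `V` (whose elements have order `≥ ν₁`) into `(β^m)`. For
`max(1, m + 1 - ν₂) ≤ b < m`, write `p₁ = β^ν₁ u` with `u(0) ≠ 0`; inverting `u` modulo `β^(m-ν₁)`
gives `A_b ≡ c - β^b p₁′/p₁` there, so that `A_b + β^b ∂` sends `p₁` into `c p₁ + (β^m)`, and it
sends `V₂` and `(β^m)` into `(β^m)` because `A_b` has order `≥ m - ν₂`. The second components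
`β^b` are independent and the first family lies in the kernel of `(A, B) ↦ B`, so rank–nullity
gives `dim W(V,m) ≥ (m - max(1, m + 1 - ν₂)) + (m - max(1, m - ν₁))`, which implies both claims.
-/

open Module Submodule

theorem card_add_card_le_finrank_of_prod {K M N ι κ : Type*} [DivisionRing K] [AddCommGroup M]
    [Module K M] [AddCommGroup N] [Module K N] [Fintype ι] [Fintype κ]
    (W : Submodule K (M × N)) [FiniteDimensional K W] {u : ι → M × N} (hu : ∀ i, u i ∈ W)
    (hu' : LinearIndependent K fun i => (u i).2) {v : κ → M} (hv : ∀ j, (v j, (0 : N)) ∈ W)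
    (hv' : LinearIndependent K v) : Fintype.card ι + Fintype.card κ ≤ finrank K W := by
  set f : W →ₗ[K] N := LinearMap.snd K M N ∘ₗ W.subtype
  rw [← f.finrank_range_add_finrank_ker]
  apply add_le_add
  · have : LinearIndependent K fun i => (⟨(u i).2, ⟨u i, hu i⟩, rfl⟩ : LinearMap.range f) :=
      .of_comp (LinearMap.range f).subtype hu'
    exact this.fintype_card_le_finrank
  · have : LinearIndependent K fun j => (⟨⟨(v j, 0), hv j⟩, rfl⟩ : LinearMap.ker f) :=
      .of_comp (LinearMap.fst K M N ∘ₗ W.subtype ∘ₗ (LinearMap.ker f).subtype) hv'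
    exact this.fintype_card_le_finrank

section

variable {k}

theorem degree_le_pred_of_degree_lt {p : k[X]} {n : ℕ} (h : p.degree < n) :
    p.degree ≤ ↑(n - 1) := by
  rcases eq_or_ne p 0 with rfl | hp
  · simp
  · rw [degree_eq_natDegree hp] at h ⊢
    have : p.natDegree < n := by exact_mod_cast h
    exact_mod_cast (by omega : p.natDegree ≤ n - 1)

theorem X_mul_derivative_X_pow_mul (n : ℕ) (u : k[X]) :
    X * derivative (X ^ n * u) = C (n : k) * (X ^ n * u) + X ^ n * (X * derivative u) := by
  cases n with
  | zero => simp
  | succ n =>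
    rw [derivative_mul, derivative_X_pow]
    simp only [Nat.add_sub_cancel]
    ring

theorem X_pow_dvd_sub_C_coeff_zero {p : k[X]} {j : ℕ} (h : X ^ j ∣ p) :
    X ^ j ∣ p - C (p.coeff 0) := by
  rcases Nat.eq_zero_or_pos j with rfl | hj
  · simp
  · rwa [X_dvd_iff.mp ((dvd_pow_self (X : k[X]) hj.ne').trans h), C_0, sub_zero]

theorem X_pow_add_dvd_mul_add_mul_derivative {i j : ℕ} {A B v : k[X]} (hA : X ^ i ∣ A)
    (hB : X ^ (i + 1) ∣ B) (hv : X ^ j ∣ v) : X ^ (i + j) ∣ A * v + B * derivative v := by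
  refine dvd_add (pow_add (X : k[X]) i j ▸ mul_dvd_mul hA hv) ?_
  refine (pow_dvd_pow (X : k[X]) (by omega : i + j ≤ i + 1 + (j - 1))).trans ?_
  exact pow_add (X : k[X]) _ _ ▸ mul_dvd_mul hB (pow_sub_one_dvd_derivative_of_pow_dvd hv)

theorem exists_degree_lt_X_pow_dvd_mul_add {u : k[X]} (hu : ¬ X ∣ u) (r : k[X]) (N : ℕ) :
    ∃ A : k[X], A.degree < N ∧ X ^ N ∣ A * u + r ∧ ∀ j, X ^ j ∣ r → X ^ j ∣ A := by
  obtain ⟨a, q, haq⟩ := (irreducible_X.coprime_iff_not_dvd.mpr hu).pow_left (m := N)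
  have hA := eq_sub_of_add_eq (modByMonic_add_div (-(r * q)) (X ^ N))
  refine ⟨-(r * q) %ₘ X ^ N, ?_, ?_, fun j hj => ?_⟩
  · simpa using degree_modByMonic_lt (-(r * q)) (monic_X_pow N)
  · rw [hA]
    exact ⟨r * a - (-(r * q) /ₘ X ^ N) * u, by linear_combination (-r) * haq⟩
  · rcases le_total j N with hjN | hNj
    · rw [hA]
      exact dvd_sub (hj.mul_right q).neg_right ((pow_dvd_pow (X : k[X]) hjN).mul_right _)
    · rw [(modByMonic_eq_zero_iff_dvd (monic_X_pow N)).mpr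
        (((pow_dvd_pow (X : k[X]) hNj).trans hj).mul_right q).neg_right]
      exact dvd_zero _

theorem linearIndependent_X_pow (s : Set ℕ) :
    LinearIndependent k fun n : s => (X : k[X]) ^ (n : ℕ) := by
  simpa [Function.comp_def, coe_basisMonomials, monomial_one_right_eq_X_pow] using
    (basisMonomials k).linearIndependent.comp ((↑) : s → ℕ) Subtype.val_injective

instance Wsub.finiteDimensional (m : ℕ) (V : Submodule k k[X]) :
    FiniteDimensional k (Wsub k m V) := by
  refine finiteDimensional_of_le (S₂ := LinearMap.range
    ((degreeLT k (m - 1 + 1)).subtype.prodMap (degreeLT k (m - 1 + 1)).subtype)) ?_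
  rintro P ⟨-, -, h₁, h₂, -⟩
  have hle : degreeLT k (m - 1 + 1) = degreeLE k ↑(m - 1) := degreeLT_succ_eq_degreeLE
  exact ⟨(⟨P.1, hle ▸ mem_degreeLE.mpr h₁⟩, ⟨P.2, hle ▸ mem_degreeLE.mpr h₂⟩), rfl⟩

theorem mem_Wsub_of {m ν₂ : ℕ} {p₁ : k[X]} {V₂ : Submodule k k[X]}
    (hV₂ : ∀ q ∈ V₂, X ^ ν₂ ∣ q) {A B : k[X]} (hA₀ : A.coeff 0 = 0) (hB₀ : B.coeff 0 = 0)
    (hAm : A.degree < m) (hBm : B.degree < m) (hA : X ^ (m - ν₂) ∣ A)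
    (hB : X ^ (m - ν₂ + 1) ∣ B)
    (hp₁ : A * p₁ + B * derivative p₁ ∈ span k {p₁} ⊔ V₂ ⊔ Bsub k m) :
    (A, B) ∈ Wsub k m (span k {p₁} ⊔ V₂ ⊔ Bsub k m) := by
  set V := span k {p₁} ⊔ V₂ ⊔ Bsub k m
  let D : k[X] →ₗ[k] k[X] := LinearMap.mulLeft k A + LinearMap.mulLeft k B ∘ₗ derivative
  have hD : ∀ v, D v = A * v + B * derivative v := fun v => rfl
  have hBsub : Bsub k m ≤ V := le_sup_right
  have hV : V ≤ V.comap D := by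
    refine sup_le (sup_le ((span_singleton_le_iff_mem _ _).mpr hp₁) fun v hv => ?_) fun w hw => ?_
    · rw [mem_comap, hD]
      exact hBsub ((pow_dvd_pow (X : k[X]) (by omega)).trans
        (X_pow_add_dvd_mul_add_mul_derivative hA hB (hV₂ v hv)))
    · have hw' := X_pow_add_dvd_mul_add_mul_derivative (i := 0) (one_dvd A)
        (by rwa [zero_add, pow_one, X_dvd_iff]) hw
      rw [zero_add] at hw'
      rw [mem_comap, hD]
      exact hBsub hw'
  exact ⟨hA₀, hB₀, degree_le_pred_of_degree_lt hAm, degree_le_pred_of_degree_lt hBm,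
    fun v hv => hV hv⟩

theorem mk_X_pow_zero_mem_Wsub {m ν₁ ν₂ a : ℕ} (hν : ν₁ < ν₂) {p₁ : k[X]} (hp₁ : X ^ ν₁ ∣ p₁)
    {V₂ : Submodule k k[X]} (hV₂ : ∀ q ∈ V₂, X ^ ν₂ ∣ q) (ha : 1 ≤ a) (ham : a < m)
    (hmν : m ≤ a + ν₁) : ((X : k[X]) ^ a, 0) ∈ Wsub k m (span k {p₁} ⊔ V₂ ⊔ Bsub k m) := by
  refine mem_Wsub_of hV₂ (by rw [coeff_X_pow, if_neg (by omega)]) (coeff_zero 0)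
    (by rw [degree_X_pow]; exact_mod_cast ham) (by simp) (pow_dvd_pow (X : k[X]) (by omega))
    (dvd_zero _) ?_
  rw [zero_mul, add_zero]
  refine mem_sup_right ((pow_dvd_pow (X : k[X]) hmν).trans ?_)
  rw [pow_add]
  exact mul_dvd_mul_left _ hp₁

theorem exists_mk_X_pow_mem_Wsub {m ν₁ ν₂ b : ℕ} {u : k[X]} (hu : ¬ X ∣ u)
    {V₂ : Submodule k k[X]} (hV₂ : ∀ q ∈ V₂, X ^ ν₂ ∣ q) (hb : 1 ≤ b) (hbm : b < m)
    (hmb : m + 1 ≤ b + ν₂) :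
    ∃ A : k[X], (A, X ^ b) ∈ Wsub k m (span k {X ^ ν₁ * u} ⊔ V₂ ⊔ Bsub k m) := by
  -- `X ^ b * (X ^ ν₁ * u)′ = E * (X ^ ν₁ * u) + X ^ ν₁ * (X ^ b * u′)`; the constant term `c`
  -- of `E` cannot be cancelled by `A`, but `c • (X ^ ν₁ * u)` lies in `V`.
  set E : k[X] := C (ν₁ : k) * X ^ (b - 1) with hE
  set c : k := E.coeff 0
  set r : k[X] := (E - C c) * u + X ^ b * derivative u with hr
  obtain ⟨A, hAdeg, hAu, hAr⟩ := exists_degree_lt_X_pow_dvd_mul_add hu r (m - ν₁)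
  have hX_r : X ∣ r := dvd_add (dvd_mul_of_dvd_left X_dvd_sub_C _)
    (dvd_mul_of_dvd_left (dvd_pow_self (X : k[X]) (by omega)) _)
  have hXpow_r : X ^ (m - ν₂) ∣ r := dvd_add (dvd_mul_of_dvd_left (X_pow_dvd_sub_C_coeff_zero
    (dvd_mul_of_dvd_right (pow_dvd_pow (X : k[X]) (by omega)) _)) _)
    (dvd_mul_of_dvd_left (pow_dvd_pow (X : k[X]) (by omega)) _)
  have hD : A * (X ^ ν₁ * u) + X ^ b * derivative (X ^ ν₁ * u) =
      c • (X ^ ν₁ * u) + X ^ ν₁ * (A * u + r) := by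
    have hb' : (X : k[X]) ^ b = X ^ (b - 1) * X := by rw [← pow_succ]; congr 1; omega
    rw [smul_eq_C_mul, hr, hE, hb', mul_assoc, X_mul_derivative_X_pow_mul]
    ring
  have hXA : X ∣ A := pow_one (X : k[X]) ▸ hAr 1 (by rwa [pow_one])
  refine ⟨A, mem_Wsub_of hV₂ (X_dvd_iff.mp hXA) (by rw [coeff_X_pow, if_neg (by omega)])
    (hAdeg.trans_le (by exact_mod_cast Nat.sub_le m ν₁)) (by rw [degree_X_pow]; exact_mod_cast hbm)
    (hAr _ hXpow_r) (pow_dvd_pow (X : k[X]) (by omega)) ?_⟩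
  rw [hD]
  refine add_mem (mem_sup_left (mem_sup_left (smul_mem _ _ (mem_span_singleton_self _)))) ?_
  refine mem_sup_right ((pow_dvd_pow (X : k[X]) (by omega : m ≤ ν₁ + (m - ν₁))).trans ?_)
  rw [pow_add]
  exact mul_dvd_mul_left _ hAu

theorem le_finrank_Wsub {m ν₁ ν₂ : ℕ} (hν : ν₁ < ν₂) {u : k[X]} (hu : ¬ X ∣ u)
    {V₂ : Submodule k k[X]} (hV₂ : ∀ q ∈ V₂, X ^ ν₂ ∣ q) :
    m - max 1 (m + 1 - ν₂) + (m - max 1 (m - ν₁)) ≤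
      finrank k (Wsub k m (span k {X ^ ν₁ * u} ⊔ V₂ ⊔ Bsub k m)) := by
  have hsnd : ∀ b : Finset.Ico (max 1 (m + 1 - ν₂)) m,
      ∃ A : k[X], (A, X ^ (b : ℕ)) ∈ Wsub k m (span k {X ^ ν₁ * u} ⊔ V₂ ⊔ Bsub k m) := by
    intro b
    obtain ⟨hb, hbm⟩ := Finset.mem_Ico.mp b.2
    obtain ⟨hb₁, hb₂⟩ := max_le_iff.mp hb
    exact exists_mk_X_pow_mem_Wsub hu hV₂ hb₁ hbm (by omega)
  choose A hA using hsnd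
  have hfst : ∀ a : Finset.Ico (max 1 (m - ν₁)) m, ((X : k[X]) ^ (a : ℕ), 0) ∈
      Wsub k m (span k {X ^ ν₁ * u} ⊔ V₂ ⊔ Bsub k m) := by
    intro a
    obtain ⟨ha, ham⟩ := Finset.mem_Ico.mp a.2
    obtain ⟨ha₁, ha₂⟩ := max_le_iff.mp ha
    exact mk_X_pow_zero_mem_Wsub hν (dvd_mul_right _ _) hV₂ ha₁ ham (by omega)
  simpa using card_add_card_le_finrank_of_prod _ hA (linearIndependent_X_pow _) hfst
    (linearIndependent_X_pow _)

end

theorem stmt16 (m : ℕ) (hm : 2 ≤ m) (ν₁ ν₂ : ℕ) (hν : ν₁ < ν₂)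
    (p₁ : Polynomial k)
    (hord₁ : X ^ ν₁ ∣ p₁) (hord₁' : ¬ X ^ (ν₁ + 1) ∣ p₁)
    (V₂ : Submodule k (Polynomial k)) (hV₂ : ∀ q ∈ V₂, X ^ ν₂ ∣ q)
    (V : Submodule k (Polynomial k))
    (hVdef : V = Submodule.span k {p₁} ⊔ V₂ ⊔ Bsub k m) :
    2 * (m : ℤ) - max 1 (max (ν₁ : ℤ) ((m : ℤ) - ν₂ + 1)) - max 1 ((m : ℤ) - ν₁) ≤
      (Module.finrank k ↥(Wsub k m V) : ℤ) ∧
    (Wsub k m V = ⊥ → ν₁ = 0 ∧ ν₂ = 1) := by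
  obtain ⟨u, rfl⟩ := hord₁
  have hu : ¬ X ∣ u := fun h => hord₁' (pow_succ (X : k[X]) ν₁ ▸ mul_dvd_mul_left _ h)
  have hW := le_finrank_Wsub (m := m) hν hu hV₂
  rw [← hVdef] at hW
  refine ⟨by omega, fun hbot => ?_⟩
  rw [hbot, finrank_bot] at hW
  omega
end
end
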